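/- arXiv:2304.03340 — 5 statements merged into one kernel-verified Lean document; each statement's English description precedes it below -/
import Mathlib

section
/- For every X ∈ E, the map t ↦ F(t, X)⁻¹ (the inverse continuous linear map) is differentiable and satisfies ∂(F⁻¹)/∂t (t, X) = − F(t, X)⁻¹ ∘ D_x u(t, φ(t, X)) for all t. -/
noncomputable section

local notation "E3" => EuclideanSpace ℝ (Fin 3)

open Set Filter Topology Function Asymptotics

theorem trap_bound {E : Type*} [NormedAddCommGroup E] [NormedSpace ℝ E]
    {f f' : ℝ → E} {a b L δ : ℝ} (hab : a ≤ b) (hL : 0 ≤ L)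
    (hwin : L * (b - a) ≤ 1/4) (hδpos : 0 < δ) (hδhalf : δ ≤ 1/2)
    (hd : ∀ s ∈ Icc a b, HasDerivAt f (f' s) s)
    (hguard : ∀ s ∈ Icc a b, ‖f s‖ ≤ 1 → ‖f' s‖ ≤ L * ‖f s‖)
    (ha : ‖f a‖ ≤ δ) :
    ∀ s ∈ Icc a b, ‖f s‖ ≤ 2 * δ := by
  have hcont : ∀ s ∈ Icc a b, ContinuousAt f s := fun s hs => (hd s hs).continuousAt
  set A : Set ℝ := {c | c ∈ Icc a b ∧ ∀ s ∈ Icc a c, ‖f s‖ ≤ 2 * δ} with hA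
  have haA : a ∈ A := by
    refine ⟨⟨le_refl a, hab⟩, fun s hs => ?_⟩
    have : s = a := le_antisymm hs.2 hs.1
    rw [this]; linarith
  have hbdd : BddAbove A := ⟨b, fun x hx => hx.1.2⟩
  set c := sSup A with hc
  have hac : a ≤ c := le_csSup hbdd haA
  have hcb : c ≤ b := csSup_le ⟨a, haA⟩ fun x hx => hx.1.2
  have hIco : ∀ s ∈ Ico a c, ‖f s‖ ≤ 2 * δ := by
    intro s hs
    obtain ⟨d, hdA, hsd⟩ := exists_lt_of_lt_csSup ⟨a, haA⟩ hs.2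
    exact hdA.2 s ⟨hs.1, hsd.le⟩
  have hfc : ‖f c‖ ≤ 2 * δ := by
    rcases eq_or_lt_of_le hac with h | h
    · rw [← h]; linarith
    · have hne : (𝓝[Ico a c] c).NeBot := right_nhdsWithin_Ico_neBot h
      have htt : Tendsto (fun s => ‖f s‖) (𝓝[Ico a c] c) (𝓝 ‖f c‖) :=
        ((hcont c ⟨hac, hcb⟩).continuousWithinAt (s := Ico a c)).norm
      exact le_of_tendsto htt (eventually_mem_nhdsWithin.mono fun s hs => hIco s hs)
  have hcA : c ∈ A := ⟨⟨hac, hcb⟩, fun s hs =>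
    (eq_or_lt_of_le hs.2).elim (fun h => h ▸ hfc) fun h => hIco s ⟨hs.1, h⟩⟩
  have himpr : ∀ s ∈ Icc a c, ‖f s‖ ≤ 3/2 * δ := by
    intro s hs
    have hsub : Icc a c ⊆ Icc a b := Icc_subset_Icc le_rfl hcb
    have hmvt : ‖f s - f a‖ ≤ (L * (2 * δ)) * ‖s - a‖ := by
      refine (convex_Icc a c).norm_image_sub_le_of_norm_hasDerivWithin_le
        (f' := f') (fun y hy => (hd y (hsub hy)).hasDerivWithinAt) ?_ ⟨le_refl a, hac⟩ hs
      intro y hy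
      have h1 : ‖f y‖ ≤ 2 * δ := hcA.2 y hy
      have := hguard y (hsub hy) (by linarith)
      calc ‖f' y‖ ≤ L * ‖f y‖ := this
        _ ≤ L * (2 * δ) := by nlinarith
    have habs : ‖s - a‖ ≤ b - a := by
      rw [Real.norm_eq_abs, abs_le]
      constructor <;> [linarith [hs.1, hcb, hs.2]; linarith [hs.2, hcb]]
    have h2 : L * (2*δ) * ‖s-a‖ ≤ L * (2*δ) * (b-a) :=
      mul_le_mul_of_nonneg_left habs (by positivity)
    have h3 : ‖f s‖ ≤ ‖f a‖ + L * (2*δ) * ‖s - a‖ := by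
      have := norm_sub_norm_le (f s) (f a); linarith [hmvt]
    nlinarith [mul_nonneg (by linarith : (0:ℝ) ≤ 1/4 - L*(b-a)) (by linarith : (0:ℝ) ≤ 2*δ)]
  have hceqb : c = b := by
    by_contra hne
    have hclt : c < b := lt_of_le_of_ne hcb hne
    have h32 : ‖f c‖ ≤ 3/2*δ := himpr c ⟨hac, le_refl c⟩
    have hev : ∀ᶠ s in 𝓝 c, ‖f s‖ < 2 * δ := by
      have hcont' : ContinuousAt (fun s => ‖f s‖) c := (hcont c ⟨hac, hcb⟩).norm
      exact hcont'.eventually_lt_const (by linarith)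
    obtain ⟨ε, hεpos, hball⟩ := Metric.eventually_nhds_iff_ball.1 hev
    set c' := min b (c + ε/2) with hc'
    have hcc' : c < c' := lt_min hclt (by linarith)
    have hc'A : c' ∈ A := by
      refine ⟨⟨by linarith, min_le_left _ _⟩, fun s hs => ?_⟩
      rcases le_or_gt s c with h | h
      · exact hcA.2 s ⟨hs.1, h⟩
      · refine (hball s ?_).le
        rw [Metric.mem_ball, Real.dist_eq, abs_of_pos (by linarith)]
        have : s ≤ c + ε/2 := le_trans hs.2 (min_le_right _ _)
        linarith
    exact absurd (le_csSup hbdd hc'A) (not_le.2 hcc')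
  intro s hs
  exact hcA.2 s ⟨hs.1, hceqb ▸ hs.2⟩

theorem trap_bound₂ {E : Type*} [NormedAddCommGroup E] [NormedSpace ℝ E]
    {f f' : ℝ → E} {t₀ w L δ : ℝ} (hw : 0 ≤ w) (hL : 0 ≤ L)
    (hwin : L * w ≤ 1/4) (hδpos : 0 < δ) (hδhalf : δ ≤ 1/2)
    (hd : ∀ s ∈ Icc (t₀-w) (t₀+w), HasDerivAt f (f' s) s)
    (hguard : ∀ s ∈ Icc (t₀-w) (t₀+w), ‖f s‖ ≤ 1 → ‖f' s‖ ≤ L * ‖f s‖)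
    (h0 : ‖f t₀‖ ≤ δ) :
    ∀ s ∈ Icc (t₀-w) (t₀+w), ‖f s‖ ≤ 2 * δ := by
  have hfwd : ∀ s ∈ Icc t₀ (t₀+w), ‖f s‖ ≤ 2 * δ := by
    refine trap_bound (f' := f') (by linarith) hL (by linarith) hδpos hδhalf
      (fun s hs => hd s ⟨by linarith [hs.1], hs.2⟩)
      (fun s hs => hguard s ⟨by linarith [hs.1], hs.2⟩) h0
  have hbwd : ∀ s ∈ Icc t₀ (t₀+w), ‖f (2*t₀ - s)‖ ≤ 2 * δ := by
    refine trap_bound (f := fun s => f (2*t₀ - s)) (f' := fun s => -f' (2*t₀ - s))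
      (by linarith) hL (by linarith) hδpos hδhalf ?_ ?_ (by simpa [show 2*t₀ - t₀ = t₀ by ring] using h0)
    · intro s hs
      have hmem : 2*t₀ - s ∈ Icc (t₀-w) (t₀+w) := ⟨by linarith [hs.2], by linarith [hs.1]⟩
      have hinner : HasDerivAt (fun s : ℝ => 2*t₀ - s) (-1) s := by
        simpa using (hasDerivAt_id s).const_sub (2*t₀)
      simpa [Function.comp_def] using (hd _ hmem).scomp s hinner
    · intro s hs hle
      have hmem : 2*t₀ - s ∈ Icc (t₀-w) (t₀+w) := ⟨by linarith [hs.2], by linarith [hs.1]⟩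
      simpa using hguard _ hmem hle
  intro s hs
  rcases le_or_gt t₀ s with h | h
  · exact hfwd s ⟨h, hs.2⟩
  · have := hbwd (2*t₀ - s) ⟨by linarith, by linarith [hs.1]⟩
    simpa [show 2*t₀ - (2*t₀ - s) = s by ring] using this

open RealInnerProductSpace in
theorem opnorm_le_sum_basis (T : EuclideanSpace ℝ (Fin 3) →L[ℝ] EuclideanSpace ℝ (Fin 3)) :
    ‖T‖ ≤ ∑ i : Fin 3, ‖T (EuclideanSpace.single i 1)‖ := by
  refine T.opNorm_le_bound (Finset.sum_nonneg fun i _ => norm_nonneg _) fun z => ?_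
  have hz : z = ∑ i : Fin 3, z i • EuclideanSpace.single i (1:ℝ) := by
    ext j
    rw [WithLp.ofLp_sum, Finset.sum_apply]
    simp [EuclideanSpace.single_apply]
  calc ‖T z‖ = ‖∑ i : Fin 3, z i • T (EuclideanSpace.single i 1)‖ := by
        conv_lhs => rw [hz]
        simp [map_sum]
    _ ≤ ∑ i : Fin 3, ‖z i • T (EuclideanSpace.single i 1)‖ := norm_sum_le _ _
    _ ≤ ∑ i : Fin 3, ‖T (EuclideanSpace.single i 1)‖ * ‖z‖ := by
        refine Finset.sum_le_sum fun i _ => ?_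
        rw [norm_smul, mul_comm]
        gcongr
        calc ‖z i‖ = |⟪EuclideanSpace.single i (1:ℝ), z⟫| := by
              simp [EuclideanSpace.inner_single_left, Real.norm_eq_abs]
          _ ≤ ‖EuclideanSpace.single i (1:ℝ)‖ * ‖z‖ := abs_real_inner_le_norm _ _
          _ = ‖z‖ := by simp [EuclideanSpace.norm_single]
    _ = (∑ i : Fin 3, ‖T (EuclideanSpace.single i 1)‖) * ‖z‖ := (Finset.sum_mul ..).symm

set_option maxHeartbeats 1000000 in
theorem stepA
    (u φ : ℝ → E3 → E3)
    (F : ℝ → E3 → (E3 ≃L[ℝ] E3))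
    (hu : ContDiff ℝ (⊤ : ℕ∞) (Function.uncurry u))
    (hφt : ∀ t X, HasDerivAt (fun τ => φ τ X) (u t (φ t X)) t)
    (hφsmooth : ∀ t, ContDiff ℝ (⊤ : ℕ∞) (φ t))
    (hφinj : ∀ t, Function.Injective (φ t))
    (hF : ∀ t X, (F t X : E3 →L[ℝ] E3) = fderiv ℝ (φ t) X)
    (X : E3) (t₀ : ℝ) (v : E3) :
    HasDerivAt (fun τ => F τ X v) (fderiv ℝ (u t₀) (φ t₀ X) (F t₀ X v)) t₀ := by
  rcases eq_or_ne v 0 with rfl | hv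
  · simpa using hasDerivAt_const t₀ (0 : E3)
  -- basic constructions
  set x : ℝ → E3 := fun τ => φ τ X with hxdef
  have hx : ∀ τ, HasDerivAt x (u τ (x τ)) τ := fun τ => hφt τ X
  have hxc : Continuous x := by
    rw [continuous_iff_continuousAt]; exact fun τ => (hx τ).continuousAt
  set Du : ℝ → E3 → (E3 →L[ℝ] E3) := fun s z => fderiv ℝ (u s) z with hDudef
  have hus : ∀ s, ContDiff ℝ (⊤ : ℕ∞) (u s) := fun s =>
    hu.comp (contDiff_const.prodMk contDiff_id)
  have hDuc : Continuous (fun p : ℝ × E3 => Du p.1 p.2) := by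
    have h1 : ∀ s z, fderiv ℝ (u s) z
        = (fderiv ℝ (uncurry u) (s, z)).comp (ContinuousLinearMap.inr ℝ ℝ E3) := by
      intro s z
      have hful : HasFDerivAt (uncurry u) (fderiv ℝ (uncurry u) (s, z)) (s, z) :=
        (hu.differentiable (by simp) (s, z)).hasFDerivAt
      exact (hful.comp z (hasFDerivAt_prodMk_right s z)).fderiv
    have h2 : Continuous fun T : (ℝ × E3) →L[ℝ] E3 =>
        T.comp (ContinuousLinearMap.inr ℝ ℝ E3) :=
      ((ContinuousLinearMap.compL ℝ (EuclideanSpace ℝ (Fin 3))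
        (ℝ × EuclideanSpace ℝ (Fin 3)) (EuclideanSpace ℝ (Fin 3))).flip
        (ContinuousLinearMap.inr ℝ ℝ E3)).continuous
    have h3 : Continuous fun p : ℝ × E3 => fderiv ℝ (uncurry u) p :=
      hu.continuous_fderiv (by simp)
    have := h2.comp h3
    simp only [Function.comp] at this
    convert this using 2 with p
    exact h1 p.1 p.2
  -- compact tube
  obtain ⟨R₀, hR₀⟩ := (Bornology.IsBounded.subset_closedBall
    ((isCompact_Icc (a := t₀ - 1) (b := t₀ + 1)).image hxc).isBounded 0)
  set R := max R₀ 0 with hRdef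
  have hxR : ∀ s ∈ Icc (t₀ - 1) (t₀ + 1), ‖x s‖ ≤ R := by
    intro s hs
    have := hR₀ (mem_image_of_mem x hs)
    simp only [Metric.mem_closedBall, dist_zero_right] at this
    exact this.trans (le_max_left _ _)
  set S : Set (ℝ × E3) := Icc (t₀ - 1) (t₀ + 1) ×ˢ Metric.closedBall (0 : E3) (R + 1)
    with hSdef
  have hScomp : IsCompact S :=
    isCompact_Icc.prod (isCompact_closedBall _ _)
  -- bound M
  obtain ⟨M₀, hM₀⟩ := hScomp.exists_bound_of_continuousOn
    (hDuc.continuousOn (s := S))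
  set M := max M₀ 1 with hMdef
  have hM1 : (1:ℝ) ≤ M := le_max_right _ _
  have hMpos : (0:ℝ) < M := lt_of_lt_of_le one_pos hM1
  have hMS : ∀ p ∈ S, ‖Du p.1 p.2‖ ≤ M := fun p hp =>
    (hM₀ p hp).trans (le_max_left _ _)
  -- Lipschitz property of u s on the ball
  have hLip : ∀ s ∈ Icc (t₀ - 1) (t₀ + 1), ∀ z₁ ∈ Metric.closedBall (0:E3) (R+1),
      ∀ z₂ ∈ Metric.closedBall (0:E3) (R+1), ‖u s z₁ - u s z₂‖ ≤ M * ‖z₁ - z₂‖ := by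
    intro s hs z₁ hz₁ z₂ hz₂
    refine (convex_closedBall _ _).norm_image_sub_le_of_norm_fderiv_le
      (fun z _ => ((hus s).differentiable (by simp) z)) ?_ hz₂ hz₁
    intro z hz
    exact hMS (s, z) ⟨hs, hz⟩
  -- uniform continuity of Du on S
  have hucont : UniformContinuousOn (fun p : ℝ × E3 => Du p.1 p.2) S :=
    hScomp.uniformContinuousOn_of_continuous hDuc.continuousOn
  have hunif : ∀ ε > (0:ℝ), ∃ δ₁ > (0:ℝ), ∀ p ∈ S, ∀ q ∈ S,
      dist p q < δ₁ → ‖Du p.1 p.2 - Du q.1 q.2‖ < ε := by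
    intro ε hε
    obtain ⟨δ₁, hδ₁, h⟩ := Metric.uniformContinuousOn_iff.1 hucont ε hε
    exact ⟨δ₁, hδ₁, fun p hp q hq hd => by
      simpa [dist_eq_norm] using h p hp q hq hd⟩
  -- window
  set w : ℝ := min 1 (1/(4*M)) with hwdef
  have hwpos : 0 < w := lt_min one_pos (by positivity)
  have hw1 : w ≤ 1 := min_le_left _ _
  have hwM : M * w ≤ 1/4 := by
    have : w ≤ 1/(4*M) := min_le_right _ _
    calc M * w ≤ M * (1/(4*M)) := by nlinarith
      _ = 1/4 := by field_simp
  -- slope convergence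
  have hFd : ∀ s, HasFDerivAt (φ s) (F s X : E3 →L[ℝ] E3) X := by
    intro s
    rw [hF]
    exact ((hφsmooth s).differentiable (by simp) X).hasFDerivAt
  have hslope : ∀ s, Tendsto (fun h : ℝ => h⁻¹ • (φ s (X + h • v) - φ s X))
      (𝓝[≠] (0:ℝ)) (𝓝 ((F s X) v)) := by
    intro s
    have hline : HasDerivAt (fun h : ℝ => X + h • v) v 0 := by
      simpa using ((hasDerivAt_id (0:ℝ)).smul_const v).const_add X
    have hcomp : HasDerivAt (fun h : ℝ => φ s (X + h • v)) ((F s X : E3 →L[ℝ] E3) v) 0 := by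
      have hFd' : HasFDerivAt (φ s) (F s X : E3 →L[ℝ] E3) (X + (0:ℝ) • v) := by
        simpa using hFd s
      exact hFd'.comp_hasDerivAt (x := (0:ℝ)) hline
    have := hasDerivAt_iff_tendsto_slope.1 hcomp
    have heq : (slope (fun h : ℝ => φ s (X + h • v)) 0)
        = fun h : ℝ => h⁻¹ • (φ s (X + h • v) - φ s X) := by
      funext h
      simp [slope_def_field, slope, vsub_eq_sub]
    rw [heq] at this
    exact this
  set Du₀ : E3 →L[ℝ] E3 := Du t₀ (x t₀) with hDu₀def
  rw [hasDerivAt_iff_isLittleO, Asymptotics.isLittleO_iff]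
  intro c hc
  set C₀ : ℝ := ‖(F t₀ X : E3 →L[ℝ] E3)‖ * ‖v‖ + 1 with hC₀def
  have hC₀pos : 0 < C₀ := by positivity
  set ε₁ : ℝ := c / (6 * C₀) with hε₁def
  have hε₁pos : 0 < ε₁ := by positivity
  obtain ⟨δ₁, hδ₁pos, hδ₁⟩ := hunif ε₁ hε₁pos
  have hψ : ContinuousAt (fun s => ((s, x s) : ℝ × E3)) t₀ :=
    (continuous_id.prodMk hxc).continuousAt
  obtain ⟨w'', hw''pos, hw''⟩ := Metric.continuousAt_iff.1 hψ δ₁ hδ₁pos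
  set w' : ℝ := min w (min (w''/2) (c / (4*M^2*C₀))) with hw'def
  have hw'pos : 0 < w' := by
    refine lt_min hwpos (lt_min (by linarith) (by positivity))
  have hw'w : w' ≤ w := min_le_left _ _
  have hw'w'' : w' ≤ w''/2 := (min_le_right _ _).trans (min_le_left _ _)
  have hw'c : w' ≤ c/(4*M^2*C₀) := (min_le_right _ _).trans (min_le_right _ _)
  filter_upwards [Icc_mem_nhds (by linarith : t₀ - w' < t₀) (by linarith : t₀ < t₀ + w')]
    with τ hτ
  -- limit over h
  have hP : Tendsto (fun h : ℝ => h⁻¹ • (φ τ (X + h•v) - φ τ X)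
      - h⁻¹ • (φ t₀ (X + h•v) - φ t₀ X)
      - (τ - t₀) • Du₀ (h⁻¹ • (φ t₀ (X + h•v) - φ t₀ X))) (𝓝[≠] (0:ℝ))
      (𝓝 ((F τ X) v - (F t₀ X) v - (τ - t₀) • Du₀ ((F t₀ X) v))) := by
    refine ((hslope τ).sub (hslope t₀)).sub ?_
    exact (((Du₀.continuous.tendsto _).comp (hslope t₀)).const_smul (τ - t₀))
  have hgoal : ‖(F τ X) v - (F t₀ X) v - (τ - t₀) • Du₀ ((F t₀ X) v)‖ ≤ c * ‖τ - t₀‖ := by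
    refine le_of_tendsto hP.norm ?_
    -- eventual facts about h
    have hev1 : ∀ᶠ h : ℝ in 𝓝[≠] 0, ‖h⁻¹ • (φ t₀ (X + h•v) - φ t₀ X)‖ ≤ C₀ := by
      have h1 := (hslope t₀).eventually (Metric.closedBall_mem_nhds ((F t₀ X) v) one_pos)
      refine h1.mono fun h hh => ?_
      have h2 : ‖(F t₀ X) v‖ ≤ ‖(F t₀ X : E3 →L[ℝ] E3)‖ * ‖v‖ :=
        (F t₀ X : E3 →L[ℝ] E3).le_opNorm v
      have h3 := Metric.mem_closedBall.1 hh
      rw [dist_eq_norm] at h3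
      have := norm_sub_norm_le (h⁻¹ • (φ t₀ (X + h•v) - φ t₀ X)) ((F t₀ X) v)
      rw [hC₀def]; linarith
    have hev2 : ∀ᶠ h : ℝ in 𝓝[≠] 0, 2*‖φ t₀ (X + h•v) - φ t₀ X‖ < min δ₁ 1 := by
      have hline : Continuous fun h : ℝ => X + h•v :=
        continuous_const.add ((continuous_id (X := ℝ)).smul continuous_const)
      have hcφ : Tendsto (fun h : ℝ => 2*‖φ t₀ (X + h•v) - φ t₀ X‖) (𝓝 0) (𝓝 0) := by
        have h1 : Tendsto (fun h : ℝ => φ t₀ (X + h•v)) (𝓝 0) (𝓝 (φ t₀ X)) := by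
          have := ((hφsmooth t₀).continuous.comp hline).tendsto 0
          simpa [Function.comp_def] using this
        have h2 := ((h1.sub (tendsto_const_nhds (x := φ t₀ X))).norm).const_mul (2:ℝ)
        simpa using h2
      exact (hcφ.mono_left nhdsWithin_le_nhds).eventually_lt_const
        (by positivity : (0:ℝ) < min δ₁ 1)
    filter_upwards [hev1, hev2, eventually_mem_nhdsWithin] with h hh1 hh2 hh0
    replace hh0 : h ≠ 0 := hh0
    set Y : E3 := X + h • v with hYdef
    set r : ℝ → E3 := fun s => φ s Y - φ s X with hrdef
    have hrt₀ : r t₀ = φ t₀ (X + h•v) - φ t₀ X := rfl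
    set δh : ℝ := ‖r t₀‖ with hδhdef
    have hδhpos : 0 < δh := by
      rw [hδhdef, norm_pos_iff, hrt₀, sub_ne_zero]
      intro hcontra
      exact (smul_ne_zero hh0 hv) (by simpa using (hφinj t₀ hcontra).symm)
    have hδhC : δh ≤ C₀ * |h| := by
      have h1 : ‖h⁻¹ • (φ t₀ (X + h•v) - φ t₀ X)‖ = |h|⁻¹ * δh := by
        rw [norm_smul, Real.norm_eq_abs, abs_inv, hrt₀.symm]
      have h2 := hh1
      rw [h1] at h2
      have habs : 0 < |h| := abs_pos.2 hh0
      calc δh = |h| * (|h|⁻¹ * δh) := by field_simp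
        _ ≤ |h| * C₀ := mul_le_mul_of_nonneg_left h2 (abs_nonneg h)
        _ = C₀ * |h| := mul_comm _ _
    have hδh1 : 2 * δh < min δ₁ 1 := by rw [hδhdef, hrt₀]; exact hh2
    have hδhδ₁ : 2 * δh < δ₁ := lt_of_lt_of_le hδh1 (min_le_left _ _)
    have hδhhalf : δh ≤ 1/2 := by
      have := lt_of_lt_of_le hδh1 (min_le_right _ _); linarith
    have hr : ∀ s, HasDerivAt r (u s (φ s Y) - u s (x s)) s :=
      fun s => (hφt s Y).sub (hφt s X)
    have hsubw : Icc (t₀ - w) (t₀ + w) ⊆ Icc (t₀ - 1) (t₀ + 1) :=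
      Icc_subset_Icc (by linarith) (by linarith)
    have hyball : ∀ s ∈ Icc (t₀ - w) (t₀ + w), ‖r s‖ ≤ 1 →
        φ s Y ∈ Metric.closedBall (0:E3) (R+1) := by
      intro s hs hrs
      have hxs := hxR s (hsubw hs)
      have : φ s Y = x s + r s := by rw [hrdef]; simp [hxdef]
      rw [Metric.mem_closedBall, dist_zero_right, this]
      calc ‖x s + r s‖ ≤ ‖x s‖ + ‖r s‖ := norm_add_le _ _
        _ ≤ R + 1 := add_le_add hxs hrs
    have hguard : ∀ s ∈ Icc (t₀ - w) (t₀ + w), ‖r s‖ ≤ 1 →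
        ‖u s (φ s Y) - u s (x s)‖ ≤ M * ‖r s‖ := by
      intro s hs hrs
      have hxball : x s ∈ Metric.closedBall (0:E3) (R+1) := by
        rw [Metric.mem_closedBall, dist_zero_right]
        linarith [hxR s (hsubw hs)]
      have := hLip s (hsubw hs) (φ s Y) (hyball s hs hrs) (x s) hxball
      simpa [hrdef, hxdef] using this
    have htrap : ∀ s ∈ Icc (t₀ - w) (t₀ + w), ‖r s‖ ≤ 2 * δh := by
      refine trap_bound₂ hwpos.le hMpos.le hwM hδhpos hδhhalf
        (fun s _ => hr s) (fun s hs hrs => hguard s hs hrs) le_rfl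
    set K : E3 := Du₀ (r t₀) with hKdef
    set g : ℝ → E3 := fun s => r s - r t₀ - (s - t₀) • K with hgdef
    have hg : ∀ s, HasDerivAt g (u s (φ s Y) - u s (x s) - K) s := by
      intro s
      have h1 : HasDerivAt (fun s : ℝ => (s - t₀) • K) K s := by
        simpa using ((hasDerivAt_id s).sub_const t₀).smul_const K
      exact ((hr s).sub_const (r t₀)).sub h1
    have hw'sub : Icc (t₀ - w') (t₀ + w') ⊆ Icc (t₀ - w) (t₀ + w) :=
      Icc_subset_Icc (by linarith) (by linarith)
    -- derivative bound for g on the small window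
    have hgbound : ∀ s ∈ Icc (t₀ - w') (t₀ + w'),
        ‖u s (φ s Y) - u s (x s) - K‖ ≤ δh * (3*ε₁ + 2*M^2*w') := by
      intro s hs
      have hsw : s ∈ Icc (t₀ - w) (t₀ + w) := hw'sub hs
      have hs1 : s ∈ Icc (t₀ - 1) (t₀ + 1) := hsubw hsw
      have hrs2δ : ‖r s‖ ≤ 2 * δh := htrap s hsw
      have hrs1 : ‖r s‖ ≤ 1 := by linarith
      have hxball : ∀ ξ ∈ Metric.closedBall (x s) (2*δh),
          ξ ∈ Metric.closedBall (0:E3) (R+1) := by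
        intro ξ hξ
        rw [Metric.mem_closedBall] at hξ ⊢
        rw [dist_zero_right]
        have h1 : ‖ξ‖ ≤ ‖x s‖ + dist ξ (x s) := by
          rw [dist_eq_norm]
          have := norm_sub_norm_le ξ (x s); linarith [norm_sub_norm_le ξ (x s),
            norm_le_norm_add_norm_sub' ξ (x s)]
        have := hxR s hs1
        linarith
      -- T1
      have hT1 : ‖u s (φ s Y) - u s (x s) - (Du s (x s)) (r s)‖ ≤ ε₁ * ‖r s‖ := by
        have hidrs : φ s Y - x s = r s := rfl
        have hbnd : ∀ ξ ∈ Metric.closedBall (x s) (2*δh), ‖Du s ξ - Du s (x s)‖ ≤ ε₁ := by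
          intro ξ hξ
          have hp : ((s, ξ) : ℝ × E3) ∈ S := ⟨hs1, hxball ξ hξ⟩
          have hq : ((s, x s) : ℝ × E3) ∈ S := by
            refine ⟨hs1, ?_⟩
            rw [Metric.mem_closedBall, dist_zero_right]
            linarith [hxR s hs1]
          have hdist : dist ((s, ξ) : ℝ × E3) ((s, x s) : ℝ × E3) < δ₁ := by
            rw [Prod.dist_eq]
            simp only [dist_self]
            rw [max_def]
            split_ifs
            · exact lt_of_le_of_lt (Metric.mem_closedBall.1 hξ) hδhδ₁
            · exact hδ₁pos
          exact (hδ₁ (s, ξ) hp (s, x s) hq hdist).le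
        have hmemy : φ s Y ∈ Metric.closedBall (x s) (2*δh) := by
          rw [Metric.mem_closedBall, dist_eq_norm, hidrs]
          exact hrs2δ
        have happly := (convex_closedBall (x s) (2*δh)).norm_image_sub_le_of_norm_hasFDerivWithin_le'
          (f := u s) (f' := fun ξ => Du s ξ) (φ := Du s (x s)) (C := ε₁)
          (fun ξ _ => ((hus s).differentiable (by simp) ξ).hasFDerivAt.hasFDerivWithinAt)
          hbnd (Metric.mem_closedBall_self (by linarith)) hmemy
        rw [hidrs] at happly
        exact happly
      -- T2
      have hrdiff : ‖r s - r t₀‖ ≤ (M * (2*δh)) * ‖s - t₀‖ := by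
        refine (convex_Icc (t₀ - w) (t₀ + w)).norm_image_sub_le_of_norm_hasDerivWithin_le
          (f' := fun σ => u σ (φ σ Y) - u σ (x σ))
          (fun σ hσ => (hr σ).hasDerivWithinAt) ?_
          (by constructor <;> linarith : t₀ ∈ Icc (t₀ - w) (t₀ + w)) hsw
        intro σ hσ
        have h2δ : ‖r σ‖ ≤ 2*δh := htrap σ hσ
        have := hguard σ hσ (by linarith)
        calc ‖u σ (φ σ Y) - u σ (x σ)‖ ≤ M * ‖r σ‖ := this
          _ ≤ M * (2*δh) := by nlinarith
      have hT2 : ‖(Du s (x s)) (r s - r t₀)‖ ≤ 2*M^2*δh*w' := by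
        have hsmt : ‖s - t₀‖ ≤ w' := by
          rw [Real.norm_eq_abs, abs_le]; constructor <;> linarith [hs.1, hs.2]
        have hop : ‖Du s (x s)‖ ≤ M := by
          refine hMS (s, x s) ⟨hs1, ?_⟩
          rw [Metric.mem_closedBall, dist_zero_right]
          linarith [hxR s hs1]
        calc ‖(Du s (x s)) (r s - r t₀)‖ ≤ ‖Du s (x s)‖ * ‖r s - r t₀‖ :=
              (Du s (x s)).le_opNorm _
          _ ≤ M * ((M * (2*δh)) * ‖s - t₀‖) := by
              apply mul_le_mul hop hrdiff (norm_nonneg _) hMpos.le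
          _ ≤ M * ((M * (2*δh)) * w') := by
              have hnn : (0:ℝ) ≤ M * (2*δh) := mul_nonneg hMpos.le (by linarith)
              exact mul_le_mul_of_nonneg_left
                (mul_le_mul_of_nonneg_left hsmt hnn) hMpos.le
          _ = 2*M^2*δh*w' := by ring
      -- T3
      have hT3 : ‖(Du s (x s) - Du₀) (r t₀)‖ ≤ ε₁ * δh := by
        have hdist : dist ((s, x s) : ℝ × E3) ((t₀, x t₀) : ℝ × E3) < δ₁ := by
          apply hw''
          rw [Real.dist_eq]
          have habs : |s - t₀| ≤ w' := by
            rw [abs_le]; constructor <;> linarith [hs.1, hs.2]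
          linarith
        have hp : ((s, x s) : ℝ × E3) ∈ S := by
          refine ⟨hs1, ?_⟩
          rw [Metric.mem_closedBall, dist_zero_right]; linarith [hxR s hs1]
        have hq : ((t₀, x t₀) : ℝ × E3) ∈ S := by
          refine ⟨⟨by linarith, by linarith⟩, ?_⟩
          rw [Metric.mem_closedBall, dist_zero_right]
          have : t₀ ∈ Icc (t₀ - 1) (t₀ + 1) := ⟨by linarith, by linarith⟩
          linarith [hxR t₀ this]
        have hopd : ‖Du s (x s) - Du₀‖ ≤ ε₁ := (hδ₁ (s, x s) hp (t₀, x t₀) hq hdist).le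
        calc ‖(Du s (x s) - Du₀) (r t₀)‖ ≤ ‖Du s (x s) - Du₀‖ * δh :=
            (Du s (x s) - Du₀).le_opNorm _
          _ ≤ ε₁ * δh := by nlinarith
      -- combine
      have hdecomp : u s (φ s Y) - u s (x s) - K
          = (u s (φ s Y) - u s (x s) - (Du s (x s)) (r s))
            + (Du s (x s)) (r s - r t₀) + (Du s (x s) - Du₀) (r t₀) := by
        simp only [map_sub, ContinuousLinearMap.sub_apply, hKdef]
        abel
      rw [hdecomp]
      calc ‖(u s (φ s Y) - u s (x s) - (Du s (x s)) (r s))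
            + (Du s (x s)) (r s - r t₀) + (Du s (x s) - Du₀) (r t₀)‖
          ≤ ‖u s (φ s Y) - u s (x s) - (Du s (x s)) (r s)‖
            + ‖(Du s (x s)) (r s - r t₀)‖ + ‖(Du s (x s) - Du₀) (r t₀)‖ :=
            norm_add₃_le
        _ ≤ ε₁ * ‖r s‖ + 2*M^2*δh*w' + ε₁ * δh := by
            exact add_le_add (add_le_add hT1 hT2) hT3
        _ ≤ ε₁ * (2*δh) + 2*M^2*δh*w' + ε₁ * δh := by nlinarith
        _ = δh * (3*ε₁ + 2*M^2*w') := by ring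
    -- MVT for g
    have hτmem : τ ∈ Icc (t₀ - w') (t₀ + w') := hτ
    have hgτ : ‖g τ - g t₀‖ ≤ (δh * (3*ε₁ + 2*M^2*w')) * ‖τ - t₀‖ := by
      refine (convex_Icc (t₀ - w') (t₀ + w')).norm_image_sub_le_of_norm_hasDerivWithin_le
        (f' := fun s => u s (φ s Y) - u s (x s) - K)
        (fun s _ => (hg s).hasDerivWithinAt) hgbound
        (by constructor <;> linarith : t₀ ∈ Icc (t₀ - w') (t₀ + w')) hτmem
    have hgt₀ : g t₀ = 0 := by rw [hgdef]; simp
    rw [hgt₀, sub_zero] at hgτ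
    -- identify P h with h⁻¹ • g τ
    have hPg : h⁻¹ • (φ τ (X + h•v) - φ τ X) - h⁻¹ • (φ t₀ (X + h•v) - φ t₀ X)
        - (τ - t₀) • Du₀ (h⁻¹ • (φ t₀ (X + h•v) - φ t₀ X)) = h⁻¹ • g τ := by
      have e1 : Du₀ (h⁻¹ • (φ t₀ (X + h•v) - φ t₀ X)) = h⁻¹ • K := by
        rw [hKdef, hrt₀, map_smul]
      rw [e1]
      simp only [hgdef, hrdef, hYdef]
      module
    rw [hPg]
    have habs : (0:ℝ) < |h| := abs_pos.2 hh0
    calc ‖h⁻¹ • g τ‖ = |h|⁻¹ * ‖g τ‖ := by rw [norm_smul, Real.norm_eq_abs, abs_inv]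
      _ ≤ |h|⁻¹ * ((δh * (3*ε₁ + 2*M^2*w')) * ‖τ - t₀‖) := by
          apply mul_le_mul_of_nonneg_left hgτ (by positivity)
      _ ≤ C₀ * (3*ε₁ + 2*M^2*w') * ‖τ - t₀‖ := by
          have h1 : |h|⁻¹ * δh ≤ C₀ := by
            rw [inv_mul_le_iff₀ habs]
            calc δh ≤ C₀ * |h| := hδhC
              _ = |h| * C₀ := mul_comm _ _
          have h0 : (0:ℝ) ≤ 3*ε₁ + 2*M^2*w' := by positivity
          calc |h|⁻¹ * ((δh * (3*ε₁ + 2*M^2*w')) * ‖τ - t₀‖)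
              = (|h|⁻¹ * δh) * ((3*ε₁ + 2*M^2*w') * ‖τ - t₀‖) := by ring
            _ ≤ C₀ * ((3*ε₁ + 2*M^2*w') * ‖τ - t₀‖) := by
                apply mul_le_mul_of_nonneg_right h1 (by positivity)
            _ = C₀ * (3*ε₁ + 2*M^2*w') * ‖τ - t₀‖ := by ring
      _ ≤ c * ‖τ - t₀‖ := by
          have hC0ne : C₀ ≠ 0 := ne_of_gt hC₀pos
          have hMne : M ≠ 0 := ne_of_gt hMpos
          have h1 : C₀ * (3*ε₁) = c/2 := by
            rw [hε₁def]; field_simp; ring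
          have h2 : C₀ * (2*M^2*w') ≤ c/2 := by
            calc C₀ * (2*M^2*w') ≤ C₀ * (2*M^2*(c/(4*M^2*C₀))) := by
                  have hnn : (0:ℝ) ≤ C₀ * (2*M^2) := by positivity
                  calc C₀ * (2*M^2*w') = (C₀ * (2*M^2)) * w' := by ring
                    _ ≤ (C₀ * (2*M^2)) * (c/(4*M^2*C₀)) :=
                        mul_le_mul_of_nonneg_left hw'c hnn
                    _ = C₀ * (2*M^2*(c/(4*M^2*C₀))) := by ring
              _ = c/2 := by field_simp; ring
          have h3 : C₀ * (3*ε₁ + 2*M^2*w') ≤ c := by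
            calc C₀ * (3*ε₁ + 2*M^2*w') = C₀*(3*ε₁) + C₀*(2*M^2*w') := by ring
              _ ≤ c/2 + c/2 := add_le_add h1.le h2
              _ = c := by ring
          exact mul_le_mul_of_nonneg_right h3 (norm_nonneg _)

  calc ‖(fun τ => (F τ X) v) τ - (fun τ => (F τ X) v) t₀
      - (τ - t₀) • (fderiv ℝ (u t₀) (φ t₀ X)) ((F t₀ X) v)‖
      = ‖(F τ X) v - (F t₀ X) v - (τ - t₀) • Du₀ ((F t₀ X) v)‖ := rfl
    _ ≤ c * ‖τ - t₀‖ := hgoal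

/-- `∂(F⁻¹)/∂t (t, X) = − F(t, X)⁻¹ ∘ D_x u(t, φ(t, X))`. -/
theorem inverse_tangent_map_time_derivative
    (u φ : ℝ → E3 → E3)
    (F : ℝ → E3 → (E3 ≃L[ℝ] E3))
    (hu : ContDiff ℝ (⊤ : ℕ∞) (Function.uncurry u))
    (hφ0 : ∀ X, φ 0 X = X)
    (hφt : ∀ t X, HasDerivAt (fun τ => φ τ X) (u t (φ t X)) t)
    (hφsmooth : ∀ t, ContDiff ℝ (⊤ : ℕ∞) (φ t))
    (hφbij : ∀ t, Function.Bijective (φ t))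
    (hφinv : ∀ t, ContDiff ℝ (⊤ : ℕ∞) (Function.invFun (φ t)))
    (hF : ∀ t X, (F t X : E3 →L[ℝ] E3) = fderiv ℝ (φ t) X) :
    ∀ (X : E3) (t : ℝ),
      HasDerivAt (fun τ => ((F τ X).symm : E3 →L[ℝ] E3))
        (-(((F t X).symm : E3 →L[ℝ] E3).comp (fderiv ℝ (u t) (φ t X)))) t := by
  intro X t
  have hA : ∀ v : E3, HasDerivAt (fun τ => F τ X v)
      (fderiv ℝ (u t) (φ t X) (F t X v)) t :=
    fun v => stepA u φ F hu hφt hφsmooth (fun s => (hφbij s).1) hF X t v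
  set A : E3 →L[ℝ] E3 := (fderiv ℝ (u t) (φ t X)).comp (F t X : E3 →L[ℝ] E3) with hAdef
  have hB : HasDerivAt (fun τ => (F τ X : E3 →L[ℝ] E3)) A t := by
    rw [hasDerivAt_iff_isLittleO]
    have hcomp : ∀ i : Fin 3,
        (fun τ => ‖((F τ X : E3 →L[ℝ] E3) - (F t X : E3 →L[ℝ] E3) - (τ - t) • A)
          (EuclideanSpace.single i 1)‖) =o[𝓝 t] (fun τ => τ - t) := by
      intro i
      have h1 := hasDerivAt_iff_isLittleO.1 (hA (EuclideanSpace.single i 1))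
      have h2 : (fun τ => ((F τ X : E3 →L[ℝ] E3) - (F t X : E3 →L[ℝ] E3) - (τ - t) • A)
          (EuclideanSpace.single i 1))
          = fun τ => F τ X (EuclideanSpace.single i 1) - F t X (EuclideanSpace.single i 1)
            - (τ - t) • (fderiv ℝ (u t) (φ t X) (F t X (EuclideanSpace.single i 1))) := by
        funext τ
        simp [ContinuousLinearMap.sub_apply, ContinuousLinearMap.smul_apply, hAdef,
          ContinuousLinearMap.comp_apply]
      exact h1.norm_left.congr
        (fun τ => (congrArg norm (congrFun h2 τ)).symm) (fun _ => rfl)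
    have hsum : (fun τ => ∑ i : Fin 3,
        ‖((F τ X : E3 →L[ℝ] E3) - (F t X : E3 →L[ℝ] E3) - (τ - t) • A)
          (EuclideanSpace.single i 1)‖) =o[𝓝 t] (fun τ => τ - t) :=
      Asymptotics.IsLittleO.fun_sum (fun i _ => hcomp i)
    refine IsBigO.trans_isLittleO ?_ hsum
    refine Asymptotics.isBigO_of_le _ fun τ => ?_
    have hnn : (0:ℝ) ≤ ∑ i : Fin 3,
        ‖((F τ X : E3 →L[ℝ] E3) - (F t X : E3 →L[ℝ] E3) - (τ - t) • A)
          (EuclideanSpace.single i 1)‖ := Finset.sum_nonneg fun i _ => norm_nonneg _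
    rw [Real.norm_of_nonneg hnn]
    exact opnorm_le_sum_basis _
  -- Step C
  have hunit := hasFDerivAt_ringInverse (𝕜 := ℝ) (F t X).toUnit
  have hcoe : ((F t X).toUnit : E3 →L[ℝ] E3) = (F t X : E3 →L[ℝ] E3) := rfl
  rw [hcoe] at hunit
  have hC := hunit.comp_hasDerivAt t hB
  simp only [Function.comp_def] at hC
  have hfun : (fun τ => Ring.inverse ((F τ X : E3 →L[ℝ] E3)))
      = fun τ => ((F τ X).symm : E3 →L[ℝ] E3) := by
    funext τ
    rw [ContinuousLinearMap.ringInverse_equiv, ContinuousLinearMap.inverse_equiv]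
  rw [hfun] at hC
  refine hC.congr_deriv ?_
  have hinvcoe : ((((F t X).toUnit)⁻¹ : (E3 →L[ℝ] E3)ˣ) : E3 →L[ℝ] E3)
      = ((F t X).symm : E3 →L[ℝ] E3) := rfl
  ext z
  simp only [ContinuousLinearMap.neg_apply, ContinuousLinearMap.comp_apply,
    ContinuousLinearMap.mulLeftRight_apply, hinvcoe, hAdef,
    ContinuousLinearEquiv.coe_coe, ContinuousLinearEquiv.apply_symm_apply,
    ContinuousLinearMap.mul_apply]
end
end

section
/- Let J : ℝ × E → E be C¹ and define its Lie derivative d_L J (t, x) := ∂J/∂t(t, x) + D_x J(t, x)(u(t, x)) − D_x u(t, x)(J(t, x)). Then d_L J ≡ 0 if and only if J(t, φ(t, X)) = F(t, X)(J(0, X)) for all (t, X); i.e. a vector field is moving with the fluid if and only if it is the push-forward by the tangent map F of a time-independent field on the reference space. -/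
noncomputable section

local notation "E3" => EuclideanSpace ℝ (Fin 3)

open Set Metric Real MeasureTheory Filter

namespace VFMWF

lemma gronwall_zero {w w' : ℝ → E3} {b K : ℝ}
    (hw : ∀ s, HasDerivAt w (w' s) s)
    (hbd : ∀ s ∈ Icc (0:ℝ) b, ‖w' s‖ ≤ K * ‖w s‖) :
    ∀ s ∈ Icc (0:ℝ) b, ‖w s‖ ≤ ‖w 0‖ * Real.exp (K * s) := by
  intro s hs
  have h := norm_le_gronwallBound_of_norm_deriv_right_le (f := w) (f' := w') (a := 0) (b := b)
    (δ := ‖w 0‖) (K := K) (ε := 0)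
    (fun t _ => (hw t).continuousAt.continuousWithinAt)
    (fun t _ => (hw t).hasDerivWithinAt) le_rfl
    (fun t ht => by simpa using hbd t (Ico_subset_Icc_self ht)) s hs
  simpa [gronwallBound_ε0] using h

lemma hasDerivAt_comp_neg {w : ℝ → E3} {w' : ℝ → E3} (hw : ∀ s, HasDerivAt w (w' s) s) (s : ℝ) :
    HasDerivAt (fun τ => w (-τ)) (-w' (-s)) s := by
  have h := (hw (-s)).scomp s (hasDerivAt_neg s)
  simp only [neg_one_smul] at h
  exact h

lemma gronwall_two {w w' : ℝ → E3} {a b K : ℝ} (ha : a ≤ 0) (hb : 0 ≤ b) (hK : 0 ≤ K)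
    (hw : ∀ s, HasDerivAt w (w' s) s)
    (hbd : ∀ s ∈ Icc a b, ‖w' s‖ ≤ K * ‖w s‖) :
    ∀ s ∈ Icc a b, ‖w s‖ ≤ ‖w 0‖ * Real.exp (K * (b - a)) := by
  have key : ∀ s ∈ Icc a b, ‖w s‖ ≤ ‖w 0‖ * Real.exp (K * |s|) := by
    intro s hs
    rcases le_or_gt 0 s with h0s | hs0
    · have := gronwall_zero hw (fun σ hσ => hbd σ ⟨ha.trans hσ.1, hσ.2⟩) s ⟨h0s, hs.2⟩
      simpa [abs_of_nonneg h0s] using this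
    · have hneg := hasDerivAt_comp_neg hw
      have := gronwall_zero (b := -a) (w := fun τ => w (-τ)) (w' := fun τ => -w' (-τ)) hneg
        (fun σ hσ => by
          have : -σ ∈ Icc a b := ⟨by linarith [hσ.2], by linarith [hσ.1]⟩
          simpa using hbd (-σ) this) (-s) ⟨by linarith, by linarith [hs.1]⟩
      simpa [abs_of_neg hs0] using this
  intro s hs
  have h1 := key s hs
  have h2 : |s| ≤ b - a := by
    rcases abs_cases s with ⟨h, _⟩ | ⟨h, _⟩ <;> simp [h] <;> linarith [hs.1, hs.2]
  have := Real.exp_le_exp.2 (mul_le_mul_of_nonneg_left h2 hK)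
  nlinarith [norm_nonneg (w 0), Real.exp_pos (K * |s|)]

lemma bootstrap {w w' : ℝ → E3} {b K : ℝ} (hb : 0 ≤ b) (hK : 0 ≤ K)
    (hw : ∀ s, HasDerivAt w (w' s) s)
    (hbd : ∀ s ∈ Icc (0:ℝ) b, ‖w s‖ ≤ 1 → ‖w' s‖ ≤ K * ‖w s‖)
    (h0 : ‖w 0‖ * Real.exp (K * b) ≤ 1 / 2) :
    ∀ s ∈ Icc (0:ℝ) b, ‖w s‖ ≤ ‖w 0‖ * Real.exp (K * s) := by
  have hexp1 : (1:ℝ) ≤ Real.exp (K * b) := Real.one_le_exp (by positivity)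
  have h0' : ‖w 0‖ ≤ 1 / 2 := by nlinarith [norm_nonneg (w 0)]
  set S : Set ℝ := {s | s ∈ Icc (0:ℝ) b ∧ ∀ σ ∈ Icc (0:ℝ) s, ‖w σ‖ ≤ 1} with hSdef
  have hS0 : (0:ℝ) ∈ S := by
    refine ⟨⟨le_rfl, hb⟩, fun σ hσ => ?_⟩
    have : σ = 0 := le_antisymm hσ.2 hσ.1
    rw [this]; linarith
  have hSbdd : BddAbove S := ⟨b, fun x hx => hx.1.2⟩
  set T := sSup S with hTdef
  have hT0 : 0 ≤ T := le_csSup hSbdd hS0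
  have hTb : T ≤ b := csSup_le ⟨0, hS0⟩ fun x hx => hx.1.2
  have hlt : ∀ σ, 0 ≤ σ → σ < T → ‖w σ‖ ≤ 1 := by
    intro σ hσ0 hσT
    obtain ⟨s, hsS, hσs⟩ := exists_lt_of_lt_csSup ⟨0, hS0⟩ hσT
    exact hsS.2 σ ⟨hσ0, hσs.le⟩
  have hwT : ‖w T‖ ≤ 1 := by
    rcases eq_or_lt_of_le hT0 with hT0' | hT0'
    · rw [← hT0']; linarith
    · have hcont : Tendsto (fun σ => ‖w σ‖) (nhdsWithin T (Iio T)) (nhds ‖w T‖) :=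
        ((hw T).continuousAt.norm.continuousWithinAt)
      refine le_of_tendsto hcont ?_
      filter_upwards [Ioo_mem_nhdsLT_of_mem (⟨hT0', le_rfl⟩ : T ∈ Ioc (0:ℝ) T)] with σ hσ
      exact hlt σ hσ.1.le hσ.2
  have hTS : T ∈ S := by
    refine ⟨⟨hT0, hTb⟩, fun σ hσ => ?_⟩
    rcases lt_or_eq_of_le hσ.2 with h | h
    · exact hlt σ hσ.1 h
    · rw [h]; exact hwT
  have hgronT : ∀ s ∈ Icc (0:ℝ) T, ‖w s‖ ≤ ‖w 0‖ * Real.exp (K * s) :=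
    gronwall_zero hw (fun σ hσ => hbd σ ⟨hσ.1, hσ.2.trans hTb⟩ (hTS.2 σ hσ))
  have hTeqb : T = b := by
    by_contra hne
    have hTltb : T < b := lt_of_le_of_ne hTb hne
    have hwT2 : ‖w T‖ ≤ 1 / 2 := by
      have h1 := hgronT T ⟨hT0, le_rfl⟩
      have h2 : Real.exp (K * T) ≤ Real.exp (K * b) :=
        Real.exp_le_exp.2 (mul_le_mul_of_nonneg_left hTb hK)
      nlinarith [norm_nonneg (w 0)]
    have hcontT : ContinuousAt (fun σ => ‖w σ‖) T := (hw T).continuousAt.norm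
    have hev : ∀ᶠ σ in nhds T, ‖w σ‖ < 1 := by
      have : Iio (1:ℝ) ∈ nhds ‖w T‖ := Iio_mem_nhds (by linarith)
      exact hcontT.eventually_mem this
    obtain ⟨δ, hδ0, hδ⟩ := Metric.eventually_nhds_iff.1 hev
    set s' := min b (T + δ / 2) with hs'def
    have hTs' : T < s' := lt_min hTltb (by linarith)
    have hs'S : s' ∈ S := by
      refine ⟨⟨hT0.trans hTs'.le, min_le_left _ _⟩, fun σ hσ => ?_⟩
      rcases le_or_gt σ T with hc | hc
      · exact hTS.2 σ ⟨hσ.1, hc⟩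
      · refine (hδ ?_).le
        have hσs' : σ ≤ T + δ / 2 := hσ.2.trans (min_le_right _ _)
        rw [Real.dist_eq, abs_of_pos (by linarith)]
        linarith
    exact absurd (le_csSup hSbdd hs'S) (not_le.2 hTs')
  rw [← hTeqb]
  exact hgronT

/-- Partial derivative in the second (space) variable, as a function of the pair. -/
def pd (u : ℝ → E3 → E3) : ℝ × E3 → (E3 →L[ℝ] E3) :=
  fun p => (fderiv ℝ (Function.uncurry u) p).comp (ContinuousLinearMap.inr ℝ ℝ E3)

lemma hasFDerivAt_pd {u : ℝ → E3 → E3} (hu : ContDiff ℝ 1 (Function.uncurry u)) (s : ℝ) (x : E3) :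
    HasFDerivAt (u s) (pd u (s, x)) x := by
  have h1 : HasFDerivAt (Function.uncurry u) (fderiv ℝ (Function.uncurry u) (s, x)) (s, x) :=
    (hu.differentiable one_ne_zero (s, x)).hasFDerivAt
  have h2 : HasFDerivAt (fun y : E3 => ((s : ℝ), y)) (ContinuousLinearMap.inr ℝ ℝ E3) x :=
    hasFDerivAt_prodMk_right s x
  exact h1.comp x h2

lemma fderiv_eq_pd {u : ℝ → E3 → E3} (hu : ContDiff ℝ 1 (Function.uncurry u)) (s : ℝ) (x : E3) :
    fderiv ℝ (u s) x = pd u (s, x) := (hasFDerivAt_pd hu s x).fderiv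

lemma continuous_pd {u : ℝ → E3 → E3} (hu : ContDiff ℝ 1 (Function.uncurry u)) :
    Continuous (pd u) :=
  (hu.continuous_fderiv one_ne_zero).clm_comp continuous_const

lemma continuous_flow {u φ : ℝ → E3 → E3}
    (hφt : ∀ t X, HasDerivAt (fun τ => φ τ X) (u t (φ t X)) t) (Z : E3) :
    Continuous (fun s => φ s Z) :=
  continuous_iff_continuousAt.2 fun s => (hφt s Z).continuousAt

lemma tube {u φ : ℝ → E3 → E3} (hu : ContDiff ℝ 1 (Function.uncurry u))
    (hφ0 : ∀ X, φ 0 X = X)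
    (hφt : ∀ t X, HasDerivAt (fun τ => φ τ X) (u t (φ t X)) t)
    (hφsmooth : ∀ t, ContDiff ℝ (⊤ : ℕ∞) (φ t))
    (X : E3) {a b : ℝ} (ha : a ≤ 0) (hb : 0 ≤ b) :
    ∃ r > 0, ∃ C D : ℝ, 0 ≤ C ∧ 0 ≤ D ∧ ∀ s ∈ Icc a b, ∀ Y ∈ closedBall X r,
      ‖pd u (s, φ s Y)‖ ≤ D ∧ ‖fderiv ℝ (φ s) Y‖ ≤ C := by
  -- compact tube around the central trajectory
  have hy : Continuous fun s => φ s X := continuous_flow hφt X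
  set P : Set (ℝ × E3) :=
    (fun q : ℝ × E3 => (q.1, φ q.1 X + q.2)) '' (Icc a b ×ˢ closedBall (0 : E3) 1) with hPdef
  have hP : IsCompact P := by
    refine ((isCompact_Icc).prod (isCompact_closedBall _ _)).image ?_
    exact continuous_fst.prodMk ((hy.comp continuous_fst).add continuous_snd)
  obtain ⟨D₀, hD₀⟩ := hP.exists_bound_of_continuousOn ((continuous_pd hu).continuousOn)
  set D := max D₀ 0 with hDdef
  have hD : 0 ≤ D := le_max_right _ _
  have hmemP : ∀ s ∈ Icc a b, ∀ x ∈ closedBall (φ s X) 1, (s, x) ∈ P := by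
    intro s hs x hx
    exact ⟨(s, x - φ s X), ⟨hs, by simpa [mem_closedBall, dist_eq_norm] using hx⟩, by simp⟩
  have hMuD : ∀ s ∈ Icc a b, ∀ x ∈ closedBall (φ s X) 1, ‖pd u (s, x)‖ ≤ D :=
    fun s hs x hx => (hD₀ _ (hmemP s hs x hx)).trans (le_max_left _ _)
  have hlipu : ∀ s ∈ Icc a b, ∀ x1 ∈ closedBall (φ s X) 1, ∀ x2 ∈ closedBall (φ s X) 1,
      ‖u s x1 - u s x2‖ ≤ D * ‖x1 - x2‖ := by
    intro s hs x1 h1 x2 h2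
    refine (convex_closedBall _ _).norm_image_sub_le_of_norm_fderiv_le
      (fun x _ => (hasFDerivAt_pd hu s x).differentiableAt)
      (fun x hx => by rw [fderiv_eq_pd hu]; exact hMuD s hs x hx) h2 h1
  set r : ℝ := (1 / 2) * Real.exp (-(D * (b - a))) with hrdef
  have hr0 : 0 < r := by positivity
  have hrkey : r * Real.exp (D * (b - a)) ≤ 1 / 2 := by
    rw [hrdef, mul_assoc, ← Real.exp_add]
    simp
  -- stability of nearby trajectories
  have hstab : ∀ Y ∈ closedBall X r, ∀ s ∈ Icc a b, ‖φ s Y - φ s X‖ ≤ 1 / 2 := by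
    intro Y hY s hs
    have hYX : ‖Y - X‖ ≤ r := by simpa [mem_closedBall, dist_eq_norm] using hY
    set w : ℝ → E3 := fun s => φ s Y - φ s X with hwdef
    have hw : ∀ s, HasDerivAt w (u s (φ s Y) - u s (φ s X)) s := fun s =>
      (hφt s Y).sub (hφt s X)
    have hw0 : ‖w 0‖ = ‖Y - X‖ := by rw [hwdef]; simp [hφ0]
    have hbd : ∀ s ∈ Icc a b, ‖w s‖ ≤ 1 → ‖u s (φ s Y) - u s (φ s X)‖ ≤ D * ‖w s‖ := by
      intro s hs h1
      exact hlipu s hs (φ s Y) (by simpa [mem_closedBall, dist_eq_norm] using h1)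
        (φ s X) (mem_closedBall_self zero_le_one)
    have hYe : ∀ c, c ≤ b - a → ‖Y - X‖ * Real.exp (D * c) ≤ 1 / 2 := by
      intro c hc
      have h1 : Real.exp (D * c) ≤ Real.exp (D * (b - a)) :=
        Real.exp_le_exp.2 (mul_le_mul_of_nonneg_left hc hD)
      nlinarith [norm_nonneg (Y - X), Real.exp_pos (D * c), Real.exp_pos (D * (b - a))]
    rcases le_or_gt 0 s with h0s | hs0
    · have hmain := bootstrap hb hD hw (fun σ hσ => hbd σ ⟨ha.trans hσ.1, hσ.2⟩)
        (by rw [hw0]; exact hYe b (by linarith)) s ⟨h0s, hs.2⟩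
      calc ‖w s‖ ≤ ‖w 0‖ * Real.exp (D * s) := hmain
        _ ≤ 1 / 2 := by rw [hw0]; exact hYe s (by linarith [hs.2])
    · have hneg := hasDerivAt_comp_neg hw
      have hmain := bootstrap (b := -a) (w := fun τ => w (-τ))
        (w' := fun τ => -(u (-τ) (φ (-τ) Y) - u (-τ) (φ (-τ) X)))
        (by linarith) hD hneg
        (fun σ hσ => by
          have hmem : -σ ∈ Icc a b := ⟨by linarith [hσ.2], by linarith [hσ.1]⟩
          intro h1
          rw [norm_neg]
          exact hbd (-σ) hmem h1)
        (by simp only [neg_zero, hw0]; exact hYe (-a) (by linarith))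
        (-s) ⟨by linarith, by linarith [hs.1]⟩
      calc ‖w s‖ = ‖w (- - s)‖ := by rw [neg_neg]
        _ ≤ ‖w (-0)‖ * Real.exp (D * (-s)) := hmain
        _ ≤ 1 / 2 := by
            rw [neg_zero, hw0]; exact hYe (-s) (by linarith [hs.1])
  have hball : ∀ Y ∈ closedBall X r, ∀ s ∈ Icc a b, φ s Y ∈ closedBall (φ s X) 1 := by
    intro Y hY s hs
    have := hstab Y hY s hs
    simp only [mem_closedBall, dist_eq_norm]
    linarith
  -- pairwise Lipschitz estimate
  set C := Real.exp (D * (b - a)) with hCdef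
  have hC : 0 ≤ C := (Real.exp_pos _).le
  have hlip2 : ∀ Y ∈ closedBall X r, ∀ Z ∈ closedBall X r, ∀ s ∈ Icc a b,
      ‖φ s Y - φ s Z‖ ≤ C * ‖Y - Z‖ := by
    intro Y hY Z hZ s hs
    have hw : ∀ s, HasDerivAt (fun τ => φ τ Y - φ τ Z) (u s (φ s Y) - u s (φ s Z)) s := fun s =>
      (hφt s Y).sub (hφt s Z)
    have := gronwall_two ha hb hD hw (fun σ hσ =>
      hlipu σ hσ (φ σ Y) (hball Y hY σ hσ) (φ σ Z) (hball Z hZ σ hσ)) s hs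
    calc ‖φ s Y - φ s Z‖ ≤ ‖φ 0 Y - φ 0 Z‖ * Real.exp (D * (b - a)) := this
      _ = C * ‖Y - Z‖ := by
          rw [hφ0 Y, hφ0 Z, mul_comm]
  refine ⟨r / 2, by positivity, C, D, hC, hD, fun s hs Y hY => ?_⟩
  have hYr : Y ∈ closedBall X r := closedBall_subset_closedBall (by linarith) hY
  constructor
  · exact hMuD s hs _ (hball Y hYr s hs)
  · have hlipOn : LipschitzOnWith (Real.toNNReal C) (φ s) (closedBall X r) :=
      LipschitzOnWith.of_dist_le' fun x hx y hy => by
        simpa [dist_eq_norm] using hlip2 x hx y hy s hs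
    have hnbhd : closedBall X r ∈ nhds Y := by
      refine Filter.mem_of_superset (isOpen_ball.mem_nhds ?_) ball_subset_closedBall
      have := mem_closedBall.1 hY
      exact mem_ball.2 (lt_of_le_of_lt this (by linarith))
    have hle := HasFDerivAt.le_of_lipschitzOn
      (((hφsmooth s).differentiable (by simp) Y).hasFDerivAt) hnbhd hlipOn
    calc ‖fderiv ℝ (φ s) Y‖ ≤ (Real.toNNReal C : ℝ) := hle
      _ = C := Real.coe_toNNReal _ hC

lemma fderiv_flow_apply_hasDerivAt {φ : ℝ → E3 → E3}
    (hφsmooth : ∀ t, ContDiff ℝ (⊤ : ℕ∞) (φ t)) (s : ℝ) (Z v : E3) :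
    HasDerivAt (fun h : ℝ => φ s (Z + h • v)) (fderiv ℝ (φ s) Z v) 0 := by
  have hline : HasDerivAt (fun h : ℝ => Z + h • v) v 0 := by
    simpa using ((hasDerivAt_id (0:ℝ)).smul_const v).const_add Z
  have h0 : Z + (0:ℝ) • v = Z := by simp
  have hFD : HasFDerivAt (φ s) (fderiv ℝ (φ s) Z) (Z + (0:ℝ) • v) := by
    rw [h0]; exact ((hφsmooth s).differentiable (by simp) Z).hasFDerivAt
  exact hFD.comp_hasDerivAt 0 hline

lemma fderiv_flow_meas {u φ : ℝ → E3 → E3}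
    (hφt : ∀ t X, HasDerivAt (fun τ => φ τ X) (u t (φ t X)) t)
    (hφsmooth : ∀ t, ContDiff ℝ (⊤ : ℕ∞) (φ t)) (Z v : E3) :
    StronglyMeasurable (fun s => fderiv ℝ (φ s) Z v) := by
  have hq : ∀ n : ℕ, Continuous fun s => (((n : ℝ) + 1)⁻¹)⁻¹ •
      (φ s (Z + ((n : ℝ) + 1)⁻¹ • v) - φ s Z) :=
    fun n => (((continuous_flow hφt (Z + ((n : ℝ) + 1)⁻¹ • v)).sub (continuous_flow hφt Z)).const_smul (((n : ℝ) + 1)⁻¹)⁻¹)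
  refine stronglyMeasurable_of_tendsto atTop
    (f := fun (n : ℕ) s => (((n : ℝ) + 1)⁻¹)⁻¹ • (φ s (Z + ((n : ℝ) + 1)⁻¹ • v) - φ s Z))
    (fun n => (hq n).stronglyMeasurable) ?_
  rw [tendsto_pi_nhds]
  intro s
  have hF := fderiv_flow_apply_hasDerivAt hφsmooth s Z v
  rw [hasDerivAt_iff_tendsto_slope] at hF
  have hseq : Tendsto (fun n : ℕ => ((n : ℝ) + 1)⁻¹) atTop (nhdsWithin (0:ℝ) {(0:ℝ)}ᶜ) := by
    refine tendsto_nhdsWithin_of_tendsto_nhds_of_eventually_within _ ?_ ?_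
    · simpa [one_div] using tendsto_one_div_add_atTop_nhds_zero_nat (𝕜 := ℝ)
    · exact Filter.Eventually.of_forall fun n => by
        have : (0:ℝ) < ((n : ℝ) + 1)⁻¹ := by positivity
        exact this.ne'
  have hcomp := hF.comp hseq
  convert hcomp using 2 with n
  rw [Function.comp_apply, slope_def_module]
  simp

lemma integral_eq {u φ : ℝ → E3 → E3} (hu : ContDiff ℝ (⊤ : ℕ∞) (Function.uncurry u))
    (hφ0 : ∀ X, φ 0 X = X)
    (hφt : ∀ t X, HasDerivAt (fun τ => φ τ X) (u t (φ t X)) t)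
    (hφsmooth : ∀ t, ContDiff ℝ (⊤ : ℕ∞) (φ t)) (X v : E3) (t : ℝ) :
    fderiv ℝ (φ t) X v
      = v + ∫ s in (0:ℝ)..t, pd u (s, φ s X) (fderiv ℝ (φ s) X v) := by
  have hu1 : ContDiff ℝ 1 (Function.uncurry u) := hu.of_le (by simp)
  set a := min (0:ℝ) t with hadef
  set b := max (0:ℝ) t with hbdef
  have ha : a ≤ 0 := min_le_left _ _
  have hb : 0 ≤ b := le_max_left _ _
  obtain ⟨r, hr, C, D, hC, hD, htube⟩ := tube hu1 hφ0 hφt hφsmooth X ha hb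
  have hsub : uIoc (0:ℝ) t ⊆ Icc a b := Ioc_subset_Icc_self
  have hcontF : ∀ Z : E3, Continuous fun s => u s (φ s Z) := fun Z =>
    hu.continuous.comp (continuous_id.prodMk (continuous_flow hφt Z))
  have hFTC : ∀ Y : E3, φ t Y = Y + ∫ s in (0:ℝ)..t, u s (φ s Y) := by
    intro Y
    have h1 := intervalIntegral.integral_eq_sub_of_hasDerivAt
      (f := fun τ => φ τ Y) (f' := fun s => u s (φ s Y))
      (fun s _ => hφt s Y) ((hcontF Y).intervalIntegrable 0 t)
    simp only [h1, hφ0]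
    abel
  set ε := r / (2 * (‖v‖ + 1)) with hεdef
  have hε : 0 < ε := by positivity
  have hmem : ∀ h : ℝ, |h| < ε → X + h • v ∈ closedBall X r := by
    intro h hh
    have h1 : ‖h • v‖ = |h| * ‖v‖ := by rw [norm_smul, Real.norm_eq_abs]
    have h2 : |h| * ‖v‖ ≤ ε * ‖v‖ := mul_le_mul_of_nonneg_right hh.le (norm_nonneg v)
    have h3 : ε * ‖v‖ ≤ r := by
      rw [hεdef]
      rw [div_mul_eq_mul_div, div_le_iff₀ (by positivity)]
      nlinarith [norm_nonneg v, hr]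
    simp only [mem_closedBall, dist_eq_norm, add_sub_cancel_left]
    linarith
  have key := intervalIntegral.hasDerivAt_integral_of_dominated_loc_of_deriv_le
    (μ := volume) (a := (0:ℝ)) (b := t) (x₀ := (0:ℝ)) (s := Metric.ball (0:ℝ) ε)
    (F := fun h s => u s (φ s (X + h • v)))
    (F' := fun h s => pd u (s, φ s (X + h • v)) (fderiv ℝ (φ s) (X + h • v) v))
    (bound := fun _ => D * (C * ‖v‖)) (Metric.ball_mem_nhds 0 hε)
    (Filter.Eventually.of_forall fun h => (hcontF _).aestronglyMeasurable)
    ((hcontF _).intervalIntegrable 0 t)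
    (by
      have h1 : Continuous fun s => pd u (s, φ s (X + (0:ℝ) • v)) :=
        (continuous_pd hu1).comp (continuous_id.prodMk (continuous_flow hφt _))
      have h2 := fderiv_flow_meas hφt hφsmooth (X + (0:ℝ) • v) v
      have h3 : Measurable fun s =>
          pd u (s, φ s (X + (0:ℝ) • v)) (fderiv ℝ (φ s) (X + (0:ℝ) • v) v) :=
        (isBoundedBilinearMap_apply.continuous.measurable).comp
          (h1.measurable.prodMk h2.measurable)
      exact h3.stronglyMeasurable.aestronglyMeasurable)
    (Filter.Eventually.of_forall fun s hs => by
      intro h hh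
      have hball : X + h • v ∈ closedBall X r := hmem h (by simpa [Real.dist_eq] using hh)
      obtain ⟨hD1, hC1⟩ := htube s (hsub hs) _ hball
      calc ‖pd u (s, φ s (X + h • v)) (fderiv ℝ (φ s) (X + h • v) v)‖
          ≤ ‖pd u (s, φ s (X + h • v))‖ * ‖fderiv ℝ (φ s) (X + h • v) v‖ :=
            ContinuousLinearMap.le_opNorm _ _
        _ ≤ D * (C * ‖v‖) := by
            have h4 : ‖fderiv ℝ (φ s) (X + h • v) v‖ ≤ C * ‖v‖ :=
              (ContinuousLinearMap.le_opNorm _ _).trans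
                (mul_le_mul_of_nonneg_right hC1 (norm_nonneg v))
            exact mul_le_mul hD1 h4 (norm_nonneg _) hD)
    (intervalIntegrable_const)
    (Filter.Eventually.of_forall fun s _ => by
      intro h _
      have hline : HasDerivAt (fun h' : ℝ => X + h' • v) v h := by
        simpa using ((hasDerivAt_id h).smul_const v).const_add X
      have hphi : HasFDerivAt (φ s) (fderiv ℝ (φ s) (X + h • v)) (X + h • v) :=
        ((hφsmooth s).differentiable (by simp) _).hasFDerivAt
      have hus : HasFDerivAt (u s) (pd u (s, φ s (X + h • v))) (φ s (X + h • v)) :=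
        hasFDerivAt_pd hu1 s _
      exact hus.comp_hasDerivAt h (hphi.comp_hasDerivAt h hline))
  obtain ⟨-, hder⟩ := key
  have hline0 : HasDerivAt (fun h : ℝ => X + h • v) v 0 := by
    simpa using ((hasDerivAt_id (0:ℝ)).smul_const v).const_add X
  have hleft : HasDerivAt (fun h : ℝ => φ t (X + h • v)) (fderiv ℝ (φ t) X v) 0 :=
    fderiv_flow_apply_hasDerivAt hφsmooth t X v
  have hfun : (fun h : ℝ => φ t (X + h • v))
      = fun h : ℝ => (X + h • v) + ∫ s in (0:ℝ)..t, u s (φ s (X + h • v)) := by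
    funext h
    exact hFTC (X + h • v)
  rw [hfun] at hleft
  have hright := hline0.add hder
  have := hleft.unique hright
  rw [this]
  congr 1
  have h00 : X + (0:ℝ) • v = X := by simp
  simp only [h00]

lemma variational {u φ : ℝ → E3 → E3} (hu : ContDiff ℝ (⊤ : ℕ∞) (Function.uncurry u))
    (hφ0 : ∀ X, φ 0 X = X)
    (hφt : ∀ t X, HasDerivAt (fun τ => φ τ X) (u t (φ t X)) t)
    (hφsmooth : ∀ t, ContDiff ℝ (⊤ : ℕ∞) (φ t)) (X v : E3) (t : ℝ) :
    HasDerivAt (fun τ => fderiv ℝ (φ τ) X v)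
      (pd u (t, φ t X) (fderiv ℝ (φ t) X v)) t := by
  have hu1 : ContDiff ℝ 1 (Function.uncurry u) := hu.of_le (by simp)
  set g : ℝ → E3 := fun s => fderiv ℝ (φ s) X v with hgdef
  set ρ : ℝ → E3 := fun s => pd u (s, φ s X) (g s) with hρdef
  have hρmeas : StronglyMeasurable ρ := by
    have h1 : Continuous fun s => pd u (s, φ s X) :=
      (continuous_pd hu1).comp (continuous_id.prodMk (continuous_flow hφt X))
    exact ((isBoundedBilinearMap_apply.continuous.measurable).comp
      (h1.measurable.prodMk (fderiv_flow_meas hφt hφsmooth X v).measurable)).stronglyMeasurable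
  have hρint : ∀ c d : ℝ, IntervalIntegrable ρ volume c d := by
    intro c d
    set a := min (0:ℝ) (min c d) with hadef
    set b := max (0:ℝ) (max c d) with hbdef
    obtain ⟨r, hr, C, D, hC, hD, htube⟩ :=
      tube hu1 hφ0 hφt hφsmooth X (a := a) (b := b) (min_le_left _ _) (le_max_left _ _)
    have hbd : ∀ s ∈ Icc a b, ‖ρ s‖ ≤ D * (C * ‖v‖) := by
      intro s hs
      obtain ⟨hD1, hC1⟩ := htube s hs X (mem_closedBall_self hr.le)
      calc ‖ρ s‖ ≤ ‖pd u (s, φ s X)‖ * ‖g s‖ := ContinuousLinearMap.le_opNorm _ _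
        _ ≤ D * (C * ‖v‖) := by
            have h4 : ‖g s‖ ≤ C * ‖v‖ :=
              (ContinuousLinearMap.le_opNorm _ _).trans
                (mul_le_mul_of_nonneg_right hC1 (norm_nonneg v))
            exact mul_le_mul hD1 h4 (norm_nonneg _) hD
    rw [intervalIntegrable_iff]
    refine MeasureTheory.Integrable.mono'
      (g := fun _ => D * (C * ‖v‖)) ((MeasureTheory.integrableOn_const_iff (by finiteness)).2 (Or.inr ?_))
      hρmeas.aestronglyMeasurable.restrict ?_
    · exact measure_Ioc_lt_top
    · refine (MeasureTheory.ae_restrict_iff' measurableSet_uIoc).2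
        (Filter.Eventually.of_forall fun s hs => ?_)
      refine hbd s ⟨?_, ?_⟩
      · exact le_trans (min_le_right _ _) (le_of_lt hs.1)
      · exact le_trans hs.2 (le_max_right _ _)
  have hg_eq : g = fun τ => v + ∫ s in (0:ℝ)..τ, ρ s :=
    funext fun τ => integral_eq hu hφ0 hφt hφsmooth X v τ
  have hgcont : Continuous g := by
    rw [hg_eq]
    exact continuous_const.add (intervalIntegral.continuous_primitive hρint 0)
  have hρcont : Continuous ρ :=
    ((continuous_pd hu1).comp (continuous_id.prodMk (continuous_flow hφt X))).clm_apply hgcont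
  have hfin : HasDerivAt (fun τ => v + ∫ s in (0:ℝ)..τ, ρ s) (ρ t) t :=
    (intervalIntegral.integral_hasDerivAt_right (hρint 0 t)
      (hρcont.stronglyMeasurableAtFilter _ _) hρcont.continuousAt).const_add v
  rw [← hg_eq] at hfin
  exact hfin

lemma ode_zero_nonneg {w : ℝ → E3} {N : ℝ → (E3 →L[ℝ] E3)} (hN : Continuous N)
    (hw : ∀ s, HasDerivAt w ((N s) (w s)) s) (h0 : w 0 = 0) {t : ℝ} (ht : 0 ≤ t) :
    w t = 0 := by
  obtain ⟨K, hK⟩ := (isCompact_Icc (a := (0:ℝ)) (b := t)).exists_bound_of_continuousOn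
    hN.continuousOn
  have hbd : ∀ s ∈ Icc (0:ℝ) t, ‖(N s) (w s)‖ ≤ (max K 0) * ‖w s‖ := fun s hs =>
    (ContinuousLinearMap.le_opNorm _ _).trans
      (mul_le_mul_of_nonneg_right ((hK s hs).trans (le_max_left _ _)) (norm_nonneg _))
  have h := gronwall_zero hw hbd t ⟨ht, le_rfl⟩
  rw [h0] at h
  simp only [norm_zero, zero_mul] at h
  exact norm_le_zero_iff.1 h

lemma ode_zero {w : ℝ → E3} {N : ℝ → (E3 →L[ℝ] E3)} (hN : Continuous N)
    (hw : ∀ s, HasDerivAt w ((N s) (w s)) s) (h0 : w 0 = 0) (t : ℝ) :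
    w t = 0 := by
  rcases le_or_gt 0 t with ht | ht
  · exact ode_zero_nonneg hN hw h0 ht
  · have hNneg : Continuous fun τ => -(N (-τ)) := (hN.comp continuous_neg).neg
    have hwneg : ∀ s, HasDerivAt (fun τ => w (-τ)) ((-(N (-s))) ((fun τ => w (-τ)) s)) s := by
      intro s
      have := hasDerivAt_comp_neg hw s
      simpa [ContinuousLinearMap.neg_apply] using this
    have h0' : (fun τ => w (-τ)) 0 = 0 := by simpa using h0
    have := ode_zero_nonneg hNneg hwneg h0' (t := -t) (by linarith)
    simpa using this

lemma lie_sum {J : ℝ → E3 → E3} (hJ : ContDiff ℝ 1 (Function.uncurry J)) (t : ℝ) (x z : E3) :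
    deriv (fun τ => J τ x) t + fderiv ℝ (J t) x z
      = fderiv ℝ (Function.uncurry J) (t, x) (1, z) := by
  have hd : HasDerivAt (fun τ => J τ x) ((fderiv ℝ (Function.uncurry J) (t, x)) (1, 0)) t := by
    have hD := (hJ.differentiable one_ne_zero (t, x)).hasFDerivAt
    exact hD.comp_hasDerivAt t ((hasDerivAt_id t).prodMk (hasDerivAt_const t x))
  rw [hd.deriv, fderiv_eq_pd hJ]
  have hz : pd J (t, x) z = fderiv ℝ (Function.uncurry J) (t, x) (0, z) := rfl
  rw [hz, ← ContinuousLinearMap.map_add]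
  norm_num

lemma chain_flow {u φ J : ℝ → E3 → E3} (hJ : ContDiff ℝ 1 (Function.uncurry J))
    (hφt : ∀ t X, HasDerivAt (fun τ => φ τ X) (u t (φ t X)) t) (t : ℝ) (X : E3) :
    HasDerivAt (fun τ => J τ (φ τ X))
      ((fderiv ℝ (Function.uncurry J) (t, φ t X)) (1, u t (φ t X))) t :=
  by have h := (hJ.differentiable one_ne_zero (t, φ t X)).hasFDerivAt.comp_hasDerivAt t
      ((hasDerivAt_id t).prodMk (hφt t X)); exact h

end VFMWF

open VFMWF in
/-- A vector field is moving with the fluid (zero Lie derivative)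
iff it is the push-forward by the tangent map `F` of a time-independent field. -/
theorem vector_field_moving_with_fluid_iff
    (u φ : ℝ → E3 → E3)
    (F : ℝ → E3 → (E3 ≃L[ℝ] E3))
    (hu : ContDiff ℝ (⊤ : ℕ∞) (Function.uncurry u))
    (hφ0 : ∀ X, φ 0 X = X)
    (hφt : ∀ t X, HasDerivAt (fun τ => φ τ X) (u t (φ t X)) t)
    (hφsmooth : ∀ t, ContDiff ℝ (⊤ : ℕ∞) (φ t))
    (hφbij : ∀ t, Function.Bijective (φ t))
    (hφinv : ∀ t, ContDiff ℝ (⊤ : ℕ∞) (Function.invFun (φ t)))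
    (hF : ∀ t X, (F t X : E3 →L[ℝ] E3) = fderiv ℝ (φ t) X)
    (J : ℝ → E3 → E3)
    (hJ : ContDiff ℝ 1 (Function.uncurry J)) :
    (∀ t x, deriv (fun τ => J τ x) t + fderiv ℝ (J t) x (u t x)
        - fderiv ℝ (u t) x (J t x) = 0) ↔
      (∀ t X, J t (φ t X) = F t X (J 0 X)) := by
  have hu1 : ContDiff ℝ 1 (Function.uncurry u) := hu.of_le (by simp)
  have hFcoe : ∀ t X v, F t X v = fderiv ℝ (φ t) X v := by
    intro t X v
    rw [← hF t X]
    rfl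
  constructor
  · intro hlie t X
    set w : ℝ → E3 := fun τ => J τ (φ τ X) - fderiv ℝ (φ τ) X (J 0 X) with hwdef
    set N : ℝ → (E3 →L[ℝ] E3) := fun τ => pd u (τ, φ τ X) with hNdef
    have hN : Continuous N :=
      (continuous_pd hu1).comp (continuous_id.prodMk (continuous_flow hφt X))
    have hkey : ∀ τ, fderiv ℝ (Function.uncurry J) (τ, φ τ X) (1, u τ (φ τ X))
        = N τ (J τ (φ τ X)) := by
      intro τ
      have h := hlie τ (φ τ X)
      rw [sub_eq_zero] at h
      rw [← lie_sum hJ τ (φ τ X) (u τ (φ τ X)), h, fderiv_eq_pd hu1]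
    have hw : ∀ τ, HasDerivAt w ((N τ) (w τ)) τ := by
      intro τ
      have h1 := chain_flow hJ hφt τ X
      rw [hkey τ] at h1
      have h2 := variational hu hφ0 hφt hφsmooth X (J 0 X) τ
      have h3 := h1.sub h2
      show HasDerivAt w (N τ (J τ (φ τ X) - fderiv ℝ (φ τ) X (J 0 X))) τ
      rw [map_sub]
      exact h3
    have h0 : w 0 = 0 := by
      have hid : φ 0 = (id : E3 → E3) := funext hφ0
      simp [hwdef, hid, fderiv_id]
    have := ode_zero hN hw h0 t
    rw [hwdef] at this
    have h4 : J t (φ t X) = fderiv ℝ (φ t) X (J 0 X) := by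
      have := sub_eq_zero.1 this
      exact this
    rw [h4, hFcoe]
  · intro hpush t x
    obtain ⟨X, hX⟩ := (hφbij t).2 x
    have hfun : (fun τ => J τ (φ τ X)) = fun τ => fderiv ℝ (φ τ) X (J 0 X) := by
      funext τ
      rw [hpush τ X, hFcoe]
    have hvar := variational hu hφ0 hφt hφsmooth X (J 0 X) t
    rw [← hfun] at hvar
    have hchain := chain_flow hJ hφt t X
    have huniq := hchain.unique hvar
    rw [← hX, lie_sum hJ t (φ t X) (u t (φ t X)), huniq, fderiv_eq_pd hu1]
    have hJval : fderiv ℝ (φ t) X (J 0 X) = J t (φ t X) := by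
      rw [hpush t X, hFcoe]
    rw [hJval, sub_self]
end
end

section
/- (Kelvin-type theorem.) Let C : ℝ × E → (E →L[ℝ] ℝ) be a C¹ field of linear forms whose Lie derivative d_L C (t, x) := ∂C/∂t(t, x) + D_x C(t, x)(u(t, x)) + C(t, x) ∘ D_x u(t, x) vanishes identically, and let γ₀ : [0,1] → E be a C¹ curve. Then the curvilinear integral t ↦ ∫₀¹ C(t, φ(t, γ₀(σ))) ( d/dσ [φ(t, γ₀(σ))] ) dσ is constant in t; in particular it equals ∫₀¹ C(0, γ₀(σ)) (γ₀′(σ)) dσ. -/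
noncomputable section

local notation "E3" => EuclideanSpace ℝ (Fin 3)

open Set Function Filter MeasureTheory Real intervalIntegral Metric Topology
open scoped Interval

lemma slice_right {F : Type*} [NormedAddCommGroup F] [NormedSpace ℝ F]
    {f : ℝ → E3 → F} {t : ℝ} {x : E3}
    (hf : DifferentiableAt ℝ (uncurry f) (t, x)) :
    HasFDerivAt (f t) ((fderiv ℝ (uncurry f) (t, x)).comp
      (ContinuousLinearMap.inr ℝ ℝ E3)) x :=
  hf.hasFDerivAt.comp x (hasFDerivAt_prodMk_right t x)


lemma slice_left {F : Type*} [NormedAddCommGroup F] [NormedSpace ℝ F]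
    {f : ℝ → E3 → F} {t : ℝ} {x : E3}
    (hf : DifferentiableAt ℝ (uncurry f) (t, x)) :
    HasDerivAt (fun τ => f τ x) (fderiv ℝ (uncurry f) (t, x) (1, 0)) t := by
  have h2 : HasDerivAt (fun τ : ℝ => (τ, x)) ((1 : ℝ), (0 : E3)) t :=
    (hasDerivAt_id t).prodMk (hasDerivAt_const t x)
  exact hf.hasFDerivAt.comp_hasDerivAt t h2


lemma forward_bound (u φ : ℝ → E3 → E3)
    (hu : ContDiff ℝ (⊤ : ℕ∞) (Function.uncurry u))
    (hφ0 : ∀ X, φ 0 X = X)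
    (hφt : ∀ t X, HasDerivAt (fun τ => φ τ X) (u t (φ t X)) t)
    (x₀ : E3) (T : ℝ) (hT : 0 < T) :
    ∃ L ≥ (0:ℝ), ∃ δ > (0:ℝ),
      (∀ t ∈ Icc (0:ℝ) T, ∀ x y : E3, x ∈ closedBall (φ t x₀) 1 →
        y ∈ closedBall (φ t x₀) 1 → ‖u t x - u t y‖ ≤ L * ‖x - y‖) ∧
      ∀ X : E3, ‖X - x₀‖ ≤ δ → ∀ t ∈ Icc (0:ℝ) T,
        ‖φ t X - φ t x₀‖ ≤ ‖X - x₀‖ * exp (L * t) ∧ ‖φ t X - φ t x₀‖ ≤ 1 := by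
  set a : ℝ → E3 := fun t => φ t x₀ with ha
  have hacont : Continuous a := by
    rw [continuous_iff_continuousAt]; exact fun t => (hφt t x₀).continuousAt
  -- compact tube
  set Q : Set (ℝ × E3) := {p | p.1 ∈ Icc (0:ℝ) T ∧ p.2 ∈ closedBall (a p.1) 1} with hQ
  have hQclosed : IsClosed Q := by
    apply IsClosed.inter
    · exact isClosed_Icc.preimage continuous_fst
    · have : Continuous fun p : ℝ × E3 => dist p.2 (a p.1) :=
        continuous_snd.dist (hacont.comp continuous_fst)
      exact isClosed_le this continuous_const
  have hQcomp : IsCompact Q := by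
    have h1 : IsCompact (Icc (0:ℝ) T ×ˢ cthickening 1 (a '' Icc 0 T)) :=
      isCompact_Icc.prod ((isCompact_Icc.image hacont).cthickening)
    apply h1.of_isClosed_subset hQclosed
    rintro ⟨t, x⟩ ⟨ht, hx⟩
    refine ⟨ht, ?_⟩
    exact mem_cthickening_of_dist_le x (a t) 1 _ (mem_image_of_mem a ht) (mem_closedBall.1 hx)
  -- derivative in x of u, jointly continuous
  set Du : ℝ × E3 → (E3 →L[ℝ] E3) :=
    fun p => (fderiv ℝ (uncurry u) p).comp (ContinuousLinearMap.inr ℝ ℝ E3) with hDu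
  have hDucont : Continuous Du := by
    exact (hu.continuous_fderiv (by simp)).clm_comp continuous_const
  have hDuEq : ∀ t x, HasFDerivAt (u t) (Du (t, x)) x := fun t x =>
    slice_right ((hu.differentiable (by simp)) (t, x))
  obtain ⟨L₀, hL₀⟩ := hQcomp.exists_bound_of_continuousOn (hDucont.norm.continuousOn)
  set L := max L₀ 0 with hL
  have hLnn : (0:ℝ) ≤ L := le_max_right _ _
  -- Lipschitz on tube
  have hlip : ∀ t ∈ Icc (0:ℝ) T, ∀ x y : E3, x ∈ closedBall (a t) 1 →
      y ∈ closedBall (a t) 1 → ‖u t x - u t y‖ ≤ L * ‖x - y‖ := by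
    intro t ht x y hx hy
    have := (convex_closedBall (a t) 1).norm_image_sub_le_of_norm_hasFDerivWithin_le
      (f := u t) (f' := fun z => Du (t, z)) (C := L)
      (fun z hz => (hDuEq t z).hasFDerivWithinAt)
      (fun z hz => by
        have h := hL₀ (t, z) ⟨ht, hz⟩
        rw [Real.norm_eq_abs, abs_of_nonneg (norm_nonneg _)] at h
        exact le_trans h (le_max_left _ _)) hy hx
    simpa [norm_sub_rev] using this
  refine ⟨L, hLnn, exp (-(L * T)) / 2, by positivity, hlip, ?_⟩
  intro X hX
  set b : ℝ → E3 := fun t => φ t X with hb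
  have hbcont : Continuous b := by
    rw [continuous_iff_continuousAt]; exact fun t => (hφt t X).continuousAt
  set g : ℝ → E3 := fun t => b t - a t with hg
  have hgcont : Continuous g := hbcont.sub hacont
  have hg0 : ‖g 0‖ = ‖X - x₀‖ := by simp [hg, hb, ha, hφ0]
  have hXsmall : ‖X - x₀‖ * exp (L * T) ≤ 1 / 2 := by
    calc ‖X - x₀‖ * exp (L * T) ≤ (exp (-(L * T)) / 2) * exp (L * T) := by
          apply mul_le_mul_of_nonneg_right hX (exp_nonneg _)
      _ = 1 / 2 := by rw [div_mul_eq_mul_div, ← exp_add]; simp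
  set A : Set ℝ := {t ∈ Icc (0:ℝ) T | ∀ τ ∈ Icc 0 t, ‖g τ‖ ≤ ‖X - x₀‖ * exp (L * τ)} with hA
  have h0A : (0:ℝ) ∈ A := by
    refine ⟨⟨le_refl 0, le_of_lt hT⟩, ?_⟩
    intro τ hτ
    have : τ = 0 := le_antisymm hτ.2 hτ.1
    simp [this, hg0]
  have hAbdd : BddAbove A := ⟨T, fun t ht => ht.1.2⟩
  have hAne : A.Nonempty := ⟨0, h0A⟩
  set c := sSup A with hc
  have hc0 : 0 ≤ c := le_csSup hAbdd h0A
  have hcT : c ≤ T := csSup_le hAne fun t ht => ht.1.2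
  -- c ∈ A
  have hcA : c ∈ A := by
    refine ⟨⟨hc0, hcT⟩, fun τ hτ => ?_⟩
    rcases eq_or_lt_of_le hτ.1 with h0 | h0
    · have h1 : ‖g 0‖ ≤ ‖X - x₀‖ * exp (L * 0) := by rw [hg0]; simp
      rwa [← h0]
    · -- limit from the left
      have hev : ∀ᶠ s in nhdsWithin τ (Iio τ), ‖g s‖ ≤ ‖X - x₀‖ * exp (L * s) := by
        filter_upwards [Ioo_mem_nhdsLT_of_mem (⟨h0, le_refl τ⟩ : τ ∈ Ioc 0 τ)] with s hs
        obtain ⟨t, htA, hst⟩ := exists_lt_of_lt_csSup hAne (lt_of_lt_of_le hs.2 hτ.2)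
        exact htA.2 s ⟨le_of_lt hs.1, le_of_lt hst⟩
      have htend : Tendsto (fun s => ‖X - x₀‖ * exp (L * s) - ‖g s‖)
          (nhdsWithin τ (Iio τ)) (𝓝 (‖X - x₀‖ * exp (L * τ) - ‖g τ‖)) := by
        apply Tendsto.mono_left _ nhdsWithin_le_nhds
        exact ((continuous_const.mul (Real.continuous_exp.comp
          (continuous_const.mul continuous_id))).sub hgcont.norm).tendsto τ
      have hpos : (0:ℝ) ≤ ‖X - x₀‖ * exp (L * τ) - ‖g τ‖ := by
        apply ge_of_tendsto htend
        filter_upwards [hev] with s hs; linarith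
      linarith
  -- show c = T by contradiction via Gronwall extension
  have hcT' : c = T := by
    by_contra hne
    have hcltT : c < T := lt_of_le_of_ne hcT hne
    -- tube bound up to c
    have htube_c : ∀ τ ∈ Icc (0:ℝ) c, ‖g τ‖ ≤ 1/2 := by
      intro τ hτ
      refine le_trans (hcA.2 τ hτ) (le_trans ?_ hXsmall)
      apply mul_le_mul_of_nonneg_left _ (norm_nonneg _)
      exact exp_le_exp.2 (mul_le_mul_of_nonneg_left (le_trans hτ.2 hcT) hLnn)
    -- extend tube a bit beyond c
    have hgc : ‖g c‖ < 1 := lt_of_le_of_lt (htube_c c ⟨hc0, le_refl c⟩) (by norm_num)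
    have : ∀ᶠ s in 𝓝 c, ‖g s‖ < 1 := by
      have : Continuous fun s => ‖g s‖ := hgcont.norm
      exact this.continuousAt.eventually_lt continuousAt_const hgc
    obtain ⟨ε, hε, hball⟩ := Metric.eventually_nhds_iff.1 this
    set t' := min (c + ε / 2) T with ht'
    have hct' : c < t' := lt_min (by linarith) hcltT
    have ht'T : t' ≤ T := min_le_right _ _
    have htube : ∀ τ ∈ Icc (0:ℝ) t', ‖g τ‖ ≤ 1 := by
      intro τ hτ
      rcases le_or_gt τ c with h | h
      · linarith [htube_c τ ⟨hτ.1, h⟩]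
      · have : dist τ c < ε := by
          rw [Real.dist_eq, abs_of_pos (by linarith)]
          have := hτ.2
          have := min_le_left (c + ε / 2) T
          linarith [le_trans hτ.2 (min_le_left (c + ε / 2) T)]
        exact le_of_lt (hball this)
    -- Gronwall on [0, t']
    have hgron : ∀ τ ∈ Icc (0:ℝ) t', ‖g τ‖ ≤ gronwallBound (‖X - x₀‖) L 0 (τ - 0) := by
      apply norm_le_gronwallBound_of_norm_deriv_right_le
        (f' := fun τ => u τ (b τ) - u τ (a τ))
      · exact hgcont.continuousOn
      · intro s hs
        exact (((hφt s X).sub (hφt s x₀)).hasDerivWithinAt)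
      · rw [hg0]
      · intro s hs
        rw [add_zero]
        have hbmem : b s ∈ closedBall (a s) 1 := by
          rw [mem_closedBall, dist_eq_norm]; exact htube s ⟨hs.1, le_of_lt hs.2⟩
        have hamem : a s ∈ closedBall (a s) 1 := mem_closedBall_self (by norm_num)
        have := hlip s ⟨hs.1, le_trans (le_of_lt hs.2) ht'T⟩ (b s) (a s) hbmem hamem
        simpa [hg] using this
    have ht'A : t' ∈ A := by
      refine ⟨⟨le_trans hc0 (le_of_lt hct'), ht'T⟩, ?_⟩
      intro τ hτ
      have := hgron τ hτ
      rwa [sub_zero, gronwallBound_ε0] at this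
    linarith [le_csSup hAbdd ht'A]
  -- conclude
  intro t ht
  have h1 : ‖g t‖ ≤ ‖X - x₀‖ * exp (L * t) := by
    rw [← hcT'] at ht; exact hcA.2 t ht
  refine ⟨h1, ?_⟩
  refine le_trans h1 (le_trans ?_ (le_trans hXsmall (by norm_num)))
  apply mul_le_mul_of_nonneg_left _ (norm_nonneg _)
  exact exp_le_exp.2 (mul_le_mul_of_nonneg_left ht.2 hLnn)

lemma twosided_bound (u φ : ℝ → E3 → E3)
    (hu : ContDiff ℝ (⊤ : ℕ∞) (Function.uncurry u))
    (hφ0 : ∀ X, φ 0 X = X)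
    (hφt : ∀ t X, HasDerivAt (fun τ => φ τ X) (u t (φ t X)) t)
    (x₀ : E3) (T : ℝ) (hT : 0 < T) :
    ∃ L ≥ (0:ℝ), ∃ δ > (0:ℝ),
      (∀ t : ℝ, |t| ≤ T → ∀ x y : E3, x ∈ closedBall (φ t x₀) 1 →
        y ∈ closedBall (φ t x₀) 1 → ‖u t x - u t y‖ ≤ L * ‖x - y‖) ∧
      ∀ X : E3, ‖X - x₀‖ ≤ δ → ∀ t : ℝ, |t| ≤ T →
        ‖φ t X - φ t x₀‖ ≤ ‖X - x₀‖ * exp (L * T) ∧ ‖φ t X - φ t x₀‖ ≤ 1 := by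
  set u' : ℝ → E3 → E3 := fun t x => -u (-t) x with hu'
  set φ' : ℝ → E3 → E3 := fun t X => φ (-t) X with hφ'
  have hu'c : ContDiff ℝ (⊤ : ℕ∞) (Function.uncurry u') := by
    have : Function.uncurry u' = fun p : ℝ × E3 => -(Function.uncurry u (-p.1, p.2)) := rfl
    rw [this]
    exact (hu.comp ((contDiff_fst.neg).prodMk contDiff_snd)).neg
  have hφ'0 : ∀ X, φ' 0 X = X := by intro X; simp [hφ', hφ0]
  have hφ't : ∀ t X, HasDerivAt (fun τ => φ' τ X) (u' t (φ' t X)) t := by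
    intro t X
    have h1 : HasDerivAt (fun τ => φ τ X) (u (-t) (φ (-t) X)) (-t) := hφt (-t) X
    have h2 : HasDerivAt (fun τ : ℝ => -τ) (-1 : ℝ) t := (hasDerivAt_id t).neg
    have := h1.scomp t h2
    simpa [hφ', hu', Function.comp_def] using this
  obtain ⟨L₁, hL₁, δ₁, hδ₁, hlip₁, hbd₁⟩ := forward_bound u φ hu hφ0 hφt x₀ T hT
  obtain ⟨L₂, hL₂, δ₂, hδ₂, hlip₂, hbd₂⟩ := forward_bound u' φ' hu'c hφ'0 hφ't x₀ T hT
  refine ⟨max L₁ L₂, le_trans hL₁ (le_max_left _ _), min δ₁ δ₂, lt_min hδ₁ hδ₂, ?_, ?_⟩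
  · intro t ht x y hx hy
    rcases le_or_gt 0 t with h0 | h0
    · have := hlip₁ t ⟨h0, by rwa [abs_of_nonneg h0] at ht⟩ x y hx hy
      exact le_trans this (mul_le_mul_of_nonneg_right (le_max_left _ _) (norm_nonneg _))
    · have hmem : -t ∈ Icc (0:ℝ) T := ⟨by linarith, by rwa [abs_of_neg h0] at ht⟩
      have := hlip₂ (-t) hmem x y (by simpa [hφ'] using hx) (by simpa [hφ'] using hy)
      simp only [hu', neg_neg] at this
      rw [← norm_neg (u t x - u t y)]
      refine le_trans (le_of_eq (by congr 1; abel)) (le_trans this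
        (mul_le_mul_of_nonneg_right (le_max_right _ _) (norm_nonneg _)))
  · intro X hX t ht
    have hXδ₁ : ‖X - x₀‖ ≤ δ₁ := le_trans hX (min_le_left _ _)
    have hXδ₂ : ‖X - x₀‖ ≤ δ₂ := le_trans hX (min_le_right _ _)
    rcases le_or_gt 0 t with h0 | h0
    · have htm : t ∈ Icc (0:ℝ) T := ⟨h0, by rwa [abs_of_nonneg h0] at ht⟩
      obtain ⟨h1, h2⟩ := hbd₁ X hXδ₁ t htm
      refine ⟨le_trans h1 ?_, h2⟩
      apply mul_le_mul_of_nonneg_left _ (norm_nonneg _)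
      apply Real.exp_le_exp.2
      calc L₁ * t ≤ L₁ * T := mul_le_mul_of_nonneg_left htm.2 hL₁
        _ ≤ max L₁ L₂ * T := mul_le_mul_of_nonneg_right (le_max_left _ _) (le_of_lt hT)
    · have htm : -t ∈ Icc (0:ℝ) T := ⟨by linarith, by rwa [abs_of_neg h0] at ht⟩
      obtain ⟨h1, h2⟩ := hbd₂ X hXδ₂ (-t) htm
      simp only [hφ', neg_neg] at h1 h2
      refine ⟨le_trans h1 ?_, h2⟩
      apply mul_le_mul_of_nonneg_left _ (norm_nonneg _)
      apply Real.exp_le_exp.2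
      calc L₂ * -t ≤ L₂ * T := mul_le_mul_of_nonneg_left htm.2 hL₂
        _ ≤ max L₁ L₂ * T := mul_le_mul_of_nonneg_right (le_max_right _ _) (le_of_lt hT)

lemma variational (u φ : ℝ → E3 → E3)
    (hu : ContDiff ℝ (⊤ : ℕ∞) (Function.uncurry u))
    (hφ0 : ∀ X, φ 0 X = X)
    (hφt : ∀ t X, HasDerivAt (fun τ => φ τ X) (u t (φ t X)) t)
    (hφsmooth : ∀ t, ContDiff ℝ (⊤ : ℕ∞) (φ t))
    (x₀ v : E3) (t : ℝ) :
    HasDerivAt (fun s => fderiv ℝ (φ s) x₀ v)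
      (fderiv ℝ (u t) (φ t x₀) (fderiv ℝ (φ t) x₀ v)) t := by
  set a : ℝ → E3 := fun s => φ s x₀ with ha
  set w : ℝ → E3 := fun s => fderiv ℝ (φ s) x₀ v with hw
  set Du : ℝ × E3 → (E3 →L[ℝ] E3) :=
    fun p => (fderiv ℝ (uncurry u) p).comp (ContinuousLinearMap.inr ℝ ℝ E3) with hDu
  have hDucont : Continuous Du := (hu.continuous_fderiv (by simp)).clm_comp continuous_const
  have hDuEq : ∀ s x, HasFDerivAt (u s) (Du (s, x)) x := fun s x =>
    slice_right (hu.differentiable (by simp) (s, x))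
  have hfderiv_u : ∀ s x, fderiv ℝ (u s) x = Du (s, x) := fun s x => (hDuEq s x).fderiv
  have hucont : Continuous (uncurry u) := hu.continuous
  have hφcont : ∀ X, Continuous (fun s => φ s X) := fun X =>
    continuous_iff_continuousAt.2 (fun s => (hφt s X).continuousAt)
  have huφcont : ∀ X, Continuous (fun τ => u τ (φ τ X)) := fun X =>
    hucont.comp (continuous_id.prodMk (hφcont X))
  set ψ : ℝ → E3 := fun τ => Du (τ, a τ) (w τ) with hψ
  -- difference quotient in the direction v converges to w s
  have hline : ∀ s : ℝ, HasDerivAt (fun h : ℝ => φ s (x₀ + h • v)) (w s) 0 := by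
    intro s
    have hl : HasDerivAt (fun h : ℝ => x₀ + h • v) v 0 := by
      simpa using ((hasDerivAt_id (0:ℝ)).smul_const v).const_add x₀
    have hφd : HasFDerivAt (φ s) (fderiv ℝ (φ s) x₀) (x₀ + (0:ℝ) • v) := by
      simpa using ((hφsmooth s).differentiable (by simp) x₀).hasFDerivAt
    exact hφd.comp_hasDerivAt 0 hl
  have hquot : ∀ s : ℝ, Tendsto (fun h : ℝ => h⁻¹ • (φ s (x₀ + h • v) - a s))
      (𝓝[≠] (0:ℝ)) (𝓝 (w s)) := by
    intro s
    have h2 := hasDerivAt_iff_tendsto_slope_zero.1 (hline s)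
    simpa [ha] using h2
  -- integral identity
  have hident : ∀ (X : E3) (s : ℝ),
      φ s X - a s = (X - x₀) + ∫ τ in (0:ℝ)..s, (u τ (φ τ X) - u τ (a τ)) := by
    intro X s
    have hcont : Continuous fun τ => u τ (φ τ X) - u τ (a τ) :=
      (huφcont X).sub (huφcont x₀)
    set G : ℝ → E3 := fun s => φ s X - a s - ∫ τ in (0:ℝ)..s, (u τ (φ τ X) - u τ (a τ))
      with hG
    have hGd : ∀ s, HasDerivAt G 0 s := by
      intro s
      have h1 := (hφt s X).sub (hφt s x₀)
      have h2 := (hcont.integral_hasStrictDerivAt 0 s).hasDerivAt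
      exact (h1.sub h2).congr_deriv (sub_self _)
    have hconst : G s = G 0 :=
      is_const_of_deriv_eq_zero (fun s => (hGd s).differentiableAt)
        (fun s => (hGd s).deriv) s 0
    have h0 : G 0 = X - x₀ := by simp [hG, hφ0, ha]
    have := hconst.trans h0
    rw [hG] at this
    exact sub_eq_iff_eq_add.1 this
  -- key integral identity for w
  have key : ∀ s : ℝ, w s = v + ∫ τ in (0:ℝ)..s, ψ τ := by
    intro s
    set T := |s| + 1 with hT
    obtain ⟨L, hL0, δ, hδ0, hlip, hbd⟩ :=
      twosided_bound u φ hu hφ0 hφt x₀ T (by rw [hT]; positivity)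
    have habsT : ∀ τ ∈ Ι (0:ℝ) s, |τ| ≤ T := by
      intro τ hτ
      have h1 := hτ.1
      have h2 := hτ.2
      have hm1 : -|s| ≤ min 0 s := le_min (neg_nonpos.2 (abs_nonneg s)) (neg_abs_le s)
      have hm2 : max 0 s ≤ |s| := max_le (abs_nonneg s) (le_abs_self s)
      rw [abs_le]; constructor <;> [linarith; linarith]
    have hsmall : ∀ᶠ h : ℝ in 𝓝[≠] (0:ℝ), ‖(x₀ + h • v) - x₀‖ ≤ δ ∧ h ≠ 0 := by
      have h1 : ∀ᶠ h : ℝ in 𝓝 (0:ℝ), ‖(x₀ + h • v) - x₀‖ ≤ δ := by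
        have hc : Continuous fun h : ℝ => ‖(x₀ + h • v) - x₀‖ := by fun_prop
        have h0 : ‖(x₀ + (0:ℝ) • v) - x₀‖ < δ := by simpa using hδ0
        exact (hc.continuousAt.eventually_lt continuousAt_const h0).mono
          (fun h hh => le_of_lt hh)
      exact (eventually_nhdsWithin_of_eventually_nhds h1).and
        (eventually_mem_nhdsWithin.mono fun h hh => hh)
    have hRHS : Tendsto
        (fun h : ℝ => v + ∫ τ in (0:ℝ)..s, h⁻¹ • (u τ (φ τ (x₀ + h • v)) - u τ (a τ)))
        (𝓝[≠] (0:ℝ)) (𝓝 (v + ∫ τ in (0:ℝ)..s, ψ τ)) := by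
      apply Tendsto.const_add
      apply intervalIntegral.tendsto_integral_filter_of_dominated_convergence
        (bound := fun _ => L * (‖v‖ * exp (L * T)))
      · apply Eventually.of_forall
        intro h
        exact (((continuous_const (y := h⁻¹)).smul ((huφcont (x₀ + h • v)).sub (huφcont x₀)) :
          Continuous fun τ => h⁻¹ • (u τ (φ τ (x₀ + h • v)) - u τ (a τ)))).aestronglyMeasurable
      · filter_upwards [hsmall] with h hh
        apply ae_of_all
        intro τ hτ
        obtain ⟨hd, htube⟩ := hbd (x₀ + h • v) hh.1 τ (habsT τ hτ)
        have hbmem : φ τ (x₀ + h • v) ∈ closedBall (a τ) 1 := by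
          rw [mem_closedBall, dist_eq_norm]; exact htube
        have hamem : a τ ∈ closedBall (a τ) 1 := mem_closedBall_self (by norm_num)
        have hlipb := hlip τ (habsT τ hτ) _ _ hbmem hamem
        have hnv : ‖(x₀ + h • v) - x₀‖ = |h| * ‖v‖ := by
          rw [add_sub_cancel_left, norm_smul, Real.norm_eq_abs]
        have habs : (0:ℝ) < |h| := abs_pos.2 hh.2
        calc ‖h⁻¹ • (u τ (φ τ (x₀ + h • v)) - u τ (a τ))‖
            = |h|⁻¹ * ‖u τ (φ τ (x₀ + h • v)) - u τ (a τ)‖ := by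
              rw [norm_smul, Real.norm_eq_abs, abs_inv]
          _ ≤ |h|⁻¹ * (L * (|h| * ‖v‖ * exp (L * T))) := by
              apply mul_le_mul_of_nonneg_left _ (by positivity)
              refine le_trans hlipb ?_
              apply mul_le_mul_of_nonneg_left _ hL0
              rw [hnv] at hd; exact hd
          _ = L * (‖v‖ * exp (L * T)) := by field_simp
      · exact intervalIntegrable_const
      · apply ae_of_all
        intro τ hτ
        have hd : HasDerivAt (fun h : ℝ => u τ (φ τ (x₀ + h • v))) (ψ τ) 0 := by
          have h1 : HasFDerivAt (u τ) (Du (τ, a τ)) (φ τ (x₀ + (0:ℝ) • v)) := by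
            simpa [ha] using hDuEq τ (a τ)
          exact h1.comp_hasDerivAt 0 (hline τ)
        have h2 := hasDerivAt_iff_tendsto_slope_zero.1 hd
        simpa [ha] using h2
    have heqf : ∀ᶠ h : ℝ in 𝓝[≠] (0:ℝ), h⁻¹ • (φ s (x₀ + h • v) - a s)
        = v + ∫ τ in (0:ℝ)..s, h⁻¹ • (u τ (φ τ (x₀ + h • v)) - u τ (a τ)) := by
      filter_upwards [eventually_mem_nhdsWithin] with h (hh : h ∈ ({0}ᶜ : Set ℝ))
      have hh0 : h ≠ 0 := hh
      rw [hident (x₀ + h • v) s, smul_add, ← intervalIntegral.integral_smul]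
      congr 1
      rw [add_sub_cancel_left, smul_smul, inv_mul_cancel₀ hh0, one_smul]
    exact tendsto_nhds_unique ((hquot s).congr' heqf) hRHS
  -- measurability of w
  have hwmeas : StronglyMeasurable w := by
    have hseq : Tendsto (fun n : ℕ => (1:ℝ) / (n + 1)) atTop (𝓝[≠] (0:ℝ)) := by
      apply tendsto_nhdsWithin_of_tendsto_nhds_of_eventually_within
      · exact tendsto_one_div_add_atTop_nhds_zero_nat
      · refine Eventually.of_forall fun n => ?_
        have hp : (0:ℝ) < 1 / (n + 1) := by positivity
        simpa using hp.ne'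
    apply stronglyMeasurable_of_tendsto atTop
      (f := fun (n : ℕ) (s : ℝ) => ((1:ℝ) / (n + 1))⁻¹ • (φ s (x₀ + ((1:ℝ) / (n + 1)) • v) - a s))
    · intro n
      exact (((continuous_const (y := ((1:ℝ) / (n + 1))⁻¹)).smul ((hφcont _).sub (hφcont x₀)) :
        Continuous fun s => ((1:ℝ) / (n + 1))⁻¹ • (φ s (x₀ + ((1:ℝ) / (n + 1)) • v) - a s))).stronglyMeasurable
    · rw [tendsto_pi_nhds]
      intro s
      exact (hquot s).comp hseq
  have hψmeas : StronglyMeasurable ψ := by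
    have h1 : Continuous fun τ => Du (τ, a τ) :=
      hDucont.comp (continuous_id.prodMk (hφcont x₀))
    exact isBoundedBilinearMap_apply.continuous.comp_stronglyMeasurable
      (h1.stronglyMeasurable.prodMk hwmeas)
  -- integrability of ψ on all intervals
  have hψint : ∀ c d : ℝ, IntervalIntegrable ψ volume c d := by
    intro c d
    set T := max |c| |d| + 1 with hT
    obtain ⟨L, hL0, δ, hδ0, hlip, hbd⟩ :=
      twosided_bound u φ hu hφ0 hφt x₀ T
        (by rw [hT]; have h1 := abs_nonneg c; have h2 := le_max_left |c| |d|; linarith)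
    have habsT : ∀ τ ∈ Ι c d, |τ| ≤ T := by
      intro τ hτ
      have hcc : -(max |c| |d|) ≤ c := le_trans (neg_le_neg (le_max_left |c| |d|)) (neg_abs_le c)
      have hdd : -(max |c| |d|) ≤ d := le_trans (neg_le_neg (le_max_right |c| |d|)) (neg_abs_le d)
      have hc2 : c ≤ max |c| |d| := le_trans (le_abs_self c) (le_max_left _ _)
      have hd2 : d ≤ max |c| |d| := le_trans (le_abs_self d) (le_max_right _ _)
      have hmin : -(max |c| |d|) ≤ min c d := le_min hcc hdd
      have hmax : max c d ≤ max |c| |d| := max_le hc2 hd2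
      have h1 := hτ.1
      have h2 := hτ.2
      rw [abs_le]
      constructor <;> [linarith; linarith]
    -- bound on ‖w τ‖ for |τ| ≤ T
    have hwb : ∀ τ : ℝ, |τ| ≤ T → ‖w τ‖ ≤ ‖v‖ * exp (L * T) := by
      intro τ hτ
      apply le_of_tendsto (hquot τ).norm
      have h1 : ∀ᶠ h : ℝ in 𝓝 (0:ℝ), ‖(x₀ + h • v) - x₀‖ ≤ δ := by
        have hc : Continuous fun h : ℝ => ‖(x₀ + h • v) - x₀‖ := by fun_prop
        have h0 : ‖(x₀ + (0:ℝ) • v) - x₀‖ < δ := by simpa using hδ0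
        exact (hc.continuousAt.eventually_lt continuousAt_const h0).mono
          (fun h hh => le_of_lt hh)
      filter_upwards [eventually_nhdsWithin_of_eventually_nhds h1,
        eventually_mem_nhdsWithin] with h hh (hne : h ∈ ({0}ᶜ : Set ℝ))
      have hne0 : h ≠ 0 := hne
      have habs : (0:ℝ) < |h| := abs_pos.2 hne0
      obtain ⟨hd, _⟩ := hbd (x₀ + h • v) hh τ hτ
      have hnv : ‖(x₀ + h • v) - x₀‖ = |h| * ‖v‖ := by
        rw [add_sub_cancel_left, norm_smul, Real.norm_eq_abs]
      rw [hnv] at hd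
      calc ‖h⁻¹ • (φ τ (x₀ + h • v) - a τ)‖
          = |h|⁻¹ * ‖φ τ (x₀ + h • v) - a τ‖ := by
            rw [norm_smul, Real.norm_eq_abs, abs_inv]
        _ ≤ |h|⁻¹ * (|h| * ‖v‖ * exp (L * T)) := by
            exact mul_le_mul_of_nonneg_left hd (by positivity)
        _ = ‖v‖ * exp (L * T) := by field_simp
    -- bound on the CLM part
    have hAcont : Continuous fun τ => Du (τ, a τ) :=
      hDucont.comp (continuous_id.prodMk (hφcont x₀))
    obtain ⟨M, hM⟩ := (isCompact_Icc (a := -T) (b := T)).exists_bound_of_continuousOn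
      hAcont.norm.continuousOn
    rw [intervalIntegrable_iff]
    apply MeasureTheory.Integrable.mono'
      (g := fun _ => |M| * (‖v‖ * exp (L * T)))
    · exact integrableOn_const measure_Ioc_lt_top.ne
    · exact hψmeas.aestronglyMeasurable.restrict
    · rw [ae_restrict_iff' measurableSet_uIoc]
      apply ae_of_all
      intro τ hτ
      have hτT := habsT τ hτ
      have hMτ : ‖Du (τ, a τ)‖ ≤ |M| := by
        have := hM τ (abs_le.1 hτT)
        rw [Real.norm_eq_abs, abs_of_nonneg (norm_nonneg _)] at this
        exact le_trans this (le_abs_self M)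
      calc ‖ψ τ‖ ≤ ‖Du (τ, a τ)‖ * ‖w τ‖ := (Du (τ, a τ)).le_opNorm (w τ)
        _ ≤ |M| * (‖v‖ * exp (L * T)) := by
            apply mul_le_mul hMτ (hwb τ hτT) (norm_nonneg _) (abs_nonneg M)
  -- continuity of w and ψ, FTC
  have hwfun : w = fun s => v + ∫ τ in (0:ℝ)..s, ψ τ := funext key
  have hwcont : Continuous w := by
    rw [hwfun]
    exact continuous_const.add (intervalIntegral.continuous_primitive hψint 0)
  have hψcont : Continuous ψ := by
    have hAcont : Continuous fun τ => Du (τ, a τ) :=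
      hDucont.comp (continuous_id.prodMk (hφcont x₀))
    exact isBoundedBilinearMap_apply.continuous.comp (hAcont.prodMk hwcont)
  have hFTC : HasDerivAt (fun s => v + ∫ τ in (0:ℝ)..s, ψ τ) (ψ t) t := by
    have h1 := (hψcont.integral_hasStrictDerivAt 0 t).hasDerivAt
    simpa using h1.const_add v
  have hfinal : HasDerivAt w (ψ t) t := hwfun ▸ hFTC
  rw [hw] at hfinal
  rw [hfderiv_u t (φ t x₀)]
  exact hfinal

/-- Kelvin-type theorem. The circulation of a transported form field
along a fluid curve is constant in time and equals its value on the reference curve. -/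
theorem kelvin_circulation_constant
    (u φ : ℝ → E3 → E3)
    (hu : ContDiff ℝ (⊤ : ℕ∞) (Function.uncurry u))
    (hφ0 : ∀ X, φ 0 X = X)
    (hφt : ∀ t X, HasDerivAt (fun τ => φ τ X) (u t (φ t X)) t)
    (hφsmooth : ∀ t, ContDiff ℝ (⊤ : ℕ∞) (φ t))
    (hφbij : ∀ t, Function.Bijective (φ t))
    (hφinv : ∀ t, ContDiff ℝ (⊤ : ℕ∞) (Function.invFun (φ t)))
    (C : ℝ → E3 → (E3 →L[ℝ] ℝ))
    (hC : ContDiff ℝ 1 (Function.uncurry C))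
    (hLie : ∀ t x, deriv (fun τ => C τ x) t + fderiv ℝ (C t) x (u t x)
        + (C t x).comp (fderiv ℝ (u t) x) = 0)
    (γ₀ : ℝ → E3)
    (hγ₀ : ContDiff ℝ 1 γ₀) :
    ∀ t : ℝ,
      (∫ σ in (0:ℝ)..1, C t (φ t (γ₀ σ)) (deriv (fun σ' => φ t (γ₀ σ')) σ))
        = ∫ σ in (0:ℝ)..1, C 0 (γ₀ σ) (deriv γ₀ σ) := by
  intro t
  apply intervalIntegral.integral_congr
  intro σ _
  set x₀ : E3 := γ₀ σ with hx₀
  set v : E3 := deriv γ₀ σ with hv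
  have hγd : HasDerivAt γ₀ v σ := ((hγ₀.differentiable one_ne_zero) σ).hasDerivAt
  have hcomp : ∀ s : ℝ, HasDerivAt (fun σ' => φ s (γ₀ σ')) (fderiv ℝ (φ s) x₀ v) σ :=
    fun s => (((hφsmooth s).differentiable (by simp) _).hasFDerivAt).comp_hasDerivAt σ hγd
  have hderiv1 : deriv (fun σ' => φ t (γ₀ σ')) σ = fderiv ℝ (φ t) x₀ v := (hcomp t).deriv
  set a : ℝ → E3 := fun s => φ s x₀ with hadef
  set w : ℝ → E3 := fun s => fderiv ℝ (φ s) x₀ v with hwdef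
  set g : ℝ → ℝ := fun s => C s (a s) (w s) with hgdef
  have hg : ∀ s, HasDerivAt g 0 s := by
    intro s
    have hCd : DifferentiableAt ℝ (uncurry C) (s, a s) := (hC.differentiable one_ne_zero) _
    have hpt : HasDerivAt (fun τ : ℝ => (τ, a τ)) ((1:ℝ), u s (a s)) s :=
      (hasDerivAt_id s).prodMk (hφt s x₀)
    have hCfun : HasDerivAt (fun τ => C τ (a τ))
        (fderiv ℝ (uncurry C) (s, a s) (1, u s (a s))) s :=
      by have := hCd.hasFDerivAt.comp_hasDerivAt s hpt; exact this
    have hw := variational u φ hu hφ0 hφt hφsmooth x₀ v s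
    have happ := hCfun.clm_apply hw
    have hsplit : fderiv ℝ (uncurry C) (s, a s) ((1:ℝ), u s (a s))
        = deriv (fun τ => C τ (a s)) s + fderiv ℝ (C s) (a s) (u s (a s)) := by
      have h1 : ((1:ℝ), u s (a s)) = ((1:ℝ), (0:E3)) + ((0:ℝ), u s (a s)) := by simp
      rw [h1, map_add]
      congr 1
      · exact ((slice_left hCd).deriv).symm
      · rw [(slice_right hCd).fderiv]; rfl
    have hzero := hLie s (a s)
    have happzero := congrArg (fun A : E3 →L[ℝ] ℝ => A (w s)) hzero
    simp only [ContinuousLinearMap.add_apply, ContinuousLinearMap.comp_apply,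
      ContinuousLinearMap.zero_apply] at happzero
    have h0 : fderiv ℝ (uncurry C) (s, a s) ((1:ℝ), u s (a s)) (w s)
        + (C s (a s)) (fderiv ℝ (u s) (a s) (w s)) = 0 := by
      rw [hsplit, ContinuousLinearMap.add_apply]
      linarith
    exact h0 ▸ happ
  have hconst : g t = g 0 :=
    is_const_of_deriv_eq_zero (fun s => (hg s).differentiableAt)
      (fun s => (hg s).deriv) t 0
  have hid : φ 0 = id := funext hφ0
  have hg0 : g 0 = C 0 x₀ v := by
    rw [hgdef]
    simp only [hadef, hwdef, hid, fderiv_id]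
    simp
  show C t (φ t (γ₀ σ)) (deriv (fun σ' => φ t (γ₀ σ')) σ) = C 0 (γ₀ σ) (deriv γ₀ σ)
  rw [hderiv1]
  calc C t (φ t x₀) (fderiv ℝ (φ t) x₀ v) = g t := rfl
    _ = g 0 := hconst
    _ = C 0 x₀ v := hg0
end
end

section
/- If s : ℝ × E → ℝ is C² and is a scalar field moving with the fluid, i.e. ∂s/∂t(t, x) + D_x s(t, x)(u(t, x)) = 0 for all (t, x), then the form field C(t, x) := D_x s(t, x) is moving with the fluid, i.e. ∂C/∂t(t, x) + D_x C(t, x)(u(t, x)) + C(t, x) ∘ D_x u(t, x) = 0 for all (t, x). -/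
noncomputable section

local notation "E3" => EuclideanSpace ℝ (Fin 3)

/-- If a scalar field `s` is moving with the fluid, then the form
field `D_x s` is moving with the fluid. -/
theorem gradient_form_of_transported_scalar_is_transported
    (u : ℝ → E3 → E3)
    (hu : ContDiff ℝ (⊤ : ℕ∞) (Function.uncurry u))
    (s : ℝ → E3 → ℝ)
    (hs : ContDiff ℝ 2 (Function.uncurry s))
    (hsLie : ∀ t x, deriv (fun τ => s τ x) t + fderiv ℝ (s t) x (u t x) = 0) :
    ∀ t x, deriv (fun τ => fderiv ℝ (s τ) x) t
        + fderiv ℝ (fun y => fderiv ℝ (s t) y) x (u t x)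
        + (fderiv ℝ (s t) x).comp (fderiv ℝ (u t) x) = 0 := by
  intro t x
  set S := Function.uncurry s with hSdef
  have hSd : Differentiable ℝ S := hs.differentiable two_ne_zero
  have hf'c : ContDiff ℝ 1 (fderiv ℝ S) := hs.fderiv_right (le_refl 2)
  have hf'd : Differentiable ℝ (fderiv ℝ S) := hf'c.differentiable one_ne_zero
  set B := fderiv ℝ (fderiv ℝ S) (t, x) with hBdef
  have hBsymm : ∀ v w, B v w = B w v := hs.contDiffAt.isSymmSndFDerivAt (by simp [minSmoothness_of_isRCLikeNormedField])
  set inr := ContinuousLinearMap.inr ℝ ℝ E3 with hinr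
  -- spatial derivative of s τ
  have key1 : ∀ τ y, HasFDerivAt (s τ) ((fderiv ℝ S (τ, y)).comp inr) y := by
    intro τ y
    have h1 : HasFDerivAt (fun z : E3 => (τ, z)) inr y := hasFDerivAt_prodMk_right τ y
    exact (hSd (τ, y)).hasFDerivAt.comp y h1
  -- time derivative of s
  have key2 : ∀ τ y, HasDerivAt (fun σ => s σ y) (fderiv ℝ S (τ, y) (1, 0)) τ := by
    intro τ y
    have h1 : HasDerivAt (fun σ : ℝ => (σ, y)) (1, (0 : E3)) τ :=
      (hasDerivAt_id τ).prodMk (hasDerivAt_const τ y)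
    exact (hSd (τ, y)).hasFDerivAt.comp_hasDerivAt τ h1
  -- precomposition with inr as a CLM
  set L : ((ℝ × E3) →L[ℝ] ℝ) →L[ℝ] (E3 →L[ℝ] ℝ) :=
    (ContinuousLinearMap.compL ℝ E3 (ℝ × E3) ℝ).flip inr with hL
  have hLa : ∀ A : (ℝ × E3) →L[ℝ] ℝ, L A = A.comp inr := fun A => rfl
  -- time derivative term
  have hd1 : deriv (fun τ => fderiv ℝ (s τ) x) t = L (B (1, 0)) := by
    have funeq : (fun τ => fderiv ℝ (s τ) x) = fun τ => L (fderiv ℝ S (τ, x)) := by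
      funext τ; rw [(key1 τ x).fderiv, hLa]
    have h1 : HasDerivAt (fun σ : ℝ => (σ, x)) (1, (0 : E3)) t :=
      (hasDerivAt_id t).prodMk (hasDerivAt_const t x)
    have h2 : HasDerivAt (fun τ => fderiv ℝ S (τ, x)) (B (1, 0)) t :=
      (hf'd (t, x)).hasFDerivAt.comp_hasDerivAt t h1
    have h3 : HasDerivAt (fun τ => L (fderiv ℝ S (τ, x))) (L (B (1, 0))) t :=
      L.hasFDerivAt.comp_hasDerivAt t h2
    rw [funeq]; exact h3.deriv
  -- spatial derivative of the spatial gradient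
  have hinrx : HasFDerivAt (fun z : E3 => (t, z)) inr x := hasFDerivAt_prodMk_right t x
  have h2x : HasFDerivAt (fun y => fderiv ℝ S (t, y)) (B.comp inr) x :=
    (hf'd (t, x)).hasFDerivAt.comp x hinrx
  have hd2 : fderiv ℝ (fun y => fderiv ℝ (s t) y) x = L.comp (B.comp inr) := by
    have funeq : (fun y => fderiv ℝ (s t) y) = fun y => L (fderiv ℝ S (t, y)) := by
      funext y; rw [(key1 t y).fderiv, hLa]
    rw [funeq]
    exact (L.hasFDerivAt.comp x h2x).fderiv
  -- differentiability of u t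
  have hutd : Differentiable ℝ (u t) := by
    have : ContDiff ℝ (⊤ : ℕ∞) (fun y => Function.uncurry u (t, y)) :=
      hu.comp (contDiff_const.prodMk contDiff_id)
    exact this.differentiable (by simp)
  set Du := fderiv ℝ (u t) x with hDu
  -- the transported scalar equation, pointwise
  have hzero : ∀ y, fderiv ℝ S (t, y) (1, u t y) = 0 := by
    intro y
    have h := hsLie t y
    rw [(key2 t y).deriv, (key1 t y).fderiv] at h
    have : fderiv ℝ S (t, y) ((1, (0 : E3)) + ((0 : ℝ), u t y)) = 0 := by
      rw [map_add]
      simpa [hinr] using h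
    simpa using this
  -- differentiate the transported scalar equation in x
  have hw : HasFDerivAt (fun y => ((1 : ℝ), u t y)) ((0 : E3 →L[ℝ] ℝ).prod Du) x :=
    (hasFDerivAt_const (1 : ℝ) x).prodMk (hutd x).hasFDerivAt
  have hg : HasFDerivAt (fun y => fderiv ℝ S (t, y) (1, u t y))
      ((fderiv ℝ S (t, x)).comp ((0 : E3 →L[ℝ] ℝ).prod Du) + (B.comp inr).flip (1, u t x)) x :=
    h2x.clm_apply hw
  have hg0 : HasFDerivAt (fun y => fderiv ℝ S (t, y) (1, u t y)) (0 : E3 →L[ℝ] ℝ) x := by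
    have : (fun y => fderiv ℝ S (t, y) (1, u t y)) = fun _ => (0 : ℝ) := funext hzero
    rw [this]; exact hasFDerivAt_const 0 x
  have hkey : ∀ v : E3, B (0, v) (1, u t x) + fderiv ℝ S (t, x) (0, Du v) = 0 := by
    intro v
    have := hg.unique hg0
    have h := DFunLike.congr_fun this v
    simpa [ContinuousLinearMap.add_apply, ContinuousLinearMap.comp_apply,
      ContinuousLinearMap.flip_apply, ContinuousLinearMap.prod_apply, add_comm, hinr] using h
  -- conclude
  rw [hd1, hd2]
  ext v
  have hsplit : ((1 : ℝ), u t x) = ((1 : ℝ), (0 : E3)) + ((0 : ℝ), u t x) := by simp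
  have h1 := hkey v
  rw [hsplit, map_add] at h1
  have e1 : B (0, v) (1, 0) = B (1, 0) (0, v) := hBsymm _ _
  have e2 : B (0, v) (0, u t x) = B (0, u t x) (0, v) := hBsymm _ _
  simp only [hinr, ContinuousLinearMap.add_apply, ContinuousLinearMap.zero_apply,
    ContinuousLinearMap.comp_apply, hLa, ContinuousLinearMap.inr_apply,
    (key1 t x).fderiv]
  rw [e1, e2] at h1
  linarith [h1]
end
end

section
/- Let J : ℝ × E → E be a C² vector field moving with the fluid, i.e. ∂J/∂t + D_x J (u) − D_x u (J) = 0, and let ρ : ℝ × E → ℝ be C² and satisfy the continuity equation ∂ρ/∂t + D_x ρ (u) + ρ · div u = 0. Then the scalar field v(t, x) := div(ρ J)(t, x) (the divergence of the vector field x ↦ ρ(t, x) J(t, x)) satisfies ∂v/∂t + D_x v (u) + v · div u = 0, i.e. the 3-form field isomorphic to div(ρ J) is moving with the fluid. -/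
noncomputable section

local notation "E3" => EuclideanSpace ℝ (Fin 3)

/-- divergence of a vector field: trace of its Fréchet derivative. -/
def divv (w : E3 → E3) (x : E3) : ℝ :=
  LinearMap.trace ℝ E3 (fderiv ℝ w x : E3 →ₗ[ℝ] E3)

namespace Aux14

def bb : Module.Basis (Fin 3) ℝ (EuclideanSpace ℝ (Fin 3)) := (EuclideanSpace.basisFun (Fin 3) ℝ).toBasis

lemma trace_eq_sum (L : E3 →L[ℝ] E3) :
    LinearMap.trace ℝ E3 (L : E3 →ₗ[ℝ] E3) = ∑ i, L (bb i) i := by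
  rw [LinearMap.trace_eq_matrix_trace ℝ bb]
  simp [Matrix.trace, Matrix.diag, LinearMap.toMatrix_apply, bb,
    OrthonormalBasis.coe_toBasis_repr_apply, EuclideanSpace.basisFun_repr]

lemma bb_expand (x : E3) : ∑ i, x i • bb i = x := by
  have h := bb.sum_repr x
  simpa [bb, OrthonormalBasis.coe_toBasis_repr_apply, EuclideanSpace.basisFun_repr] using h

variable {G : Type*} [NormedAddCommGroup G] [NormedSpace ℝ G]

lemma partial_x' {f : ℝ × E3 → G} {t : ℝ} {x : E3} {L : ℝ × E3 →L[ℝ] G}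
    (hf : HasFDerivAt f L (t, x)) :
    HasFDerivAt (fun y => f (t, y)) (L.comp (ContinuousLinearMap.inr ℝ ℝ E3)) x :=
  hf.comp x (hasFDerivAt_prodMk_right t x)

lemma partial_t' {f : ℝ × E3 → G} {t : ℝ} {x : E3} {L : ℝ × E3 →L[ℝ] G}
    (hf : HasFDerivAt f L (t, x)) :
    HasDerivAt (fun τ => f (τ, x)) (L (1, 0)) t :=
  hf.comp_hasDerivAt t ((hasDerivAt_id t).prodMk (hasDerivAt_const t x))

lemma div_eq_sum {f : ℝ × E3 → E3} {t : ℝ} {x : E3} (hf : DifferentiableAt ℝ f (t, x)) :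
    divv (fun y => f (t, y)) x = ∑ i, fderiv ℝ f (t, x) (0, bb i) i := by
  rw [divv, (partial_x' hf.hasFDerivAt).fderiv, trace_eq_sum]
  simp


set_option maxHeartbeats 2000000 in
lemma key (u : ℝ → E3 → E3) (hu : ContDiff ℝ (⊤ : ℕ∞) (Function.uncurry u))
    (W : ℝ × E3 → E3) (hW : ContDiff ℝ 2 W)
    (hlaw : ∀ q : ℝ × E3, fderiv ℝ W q (1, 0) + fderiv ℝ W q (0, Function.uncurry u q)
      - fderiv ℝ (Function.uncurry u) q (0, W q)
      + (∑ i, fderiv ℝ (Function.uncurry u) q (0, bb i) i) • W q = 0) :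
    ∀ t x, deriv (fun τ => divv (fun y => W (τ, y)) x) t
        + fderiv ℝ (fun y => divv (fun z => W (t, z)) y) x (u t x)
        + divv (fun y => W (t, y)) x * divv (u t) x = 0 := by
  intro t x
  have hWd : Differentiable ℝ W := hW.differentiable two_ne_zero
  have hW1 : ContDiff ℝ 1 (fderiv ℝ W) := hW.fderiv_right (le_refl 2)
  have hDWd : Differentiable ℝ (fderiv ℝ W) := hW1.differentiable one_ne_zero
  have hud : Differentiable ℝ (Function.uncurry u) := hu.differentiable (by simp)
  have hU1 : ContDiff ℝ (⊤ : ℕ∞) (fderiv ℝ (Function.uncurry u)) := hu.fderiv_right (by simp)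
  have hDUd : Differentiable ℝ (fderiv ℝ (Function.uncurry u)) := hU1.differentiable (by simp)
  set p : ℝ × E3 := (t, x) with hp
  have symW : ∀ q r, fderiv ℝ (fderiv ℝ W) p q r = fderiv ℝ (fderiv ℝ W) p r q :=
    second_derivative_symmetric (fun y => (hWd y).hasFDerivAt) ((hDWd p).hasFDerivAt)
  have symU : ∀ q r, fderiv ℝ (fderiv ℝ (Function.uncurry u)) p q r
      = fderiv ℝ (fderiv ℝ (Function.uncurry u)) p r q :=
    second_derivative_symmetric (fun y => (hud y).hasFDerivAt) ((hDUd p).hasFDerivAt)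
  -- evaluation maps
  have hgW : ∀ (c : ℝ × E3), HasFDerivAt (fun q => fderiv ℝ W q c)
      ((ContinuousLinearMap.apply ℝ E3 c).comp (fderiv ℝ (fderiv ℝ W) p)) p :=
    fun c => (ContinuousLinearMap.apply ℝ E3 c).hasFDerivAt.comp p (hDWd p).hasFDerivAt
  have hgU : ∀ (c : ℝ × E3), HasFDerivAt (fun q => fderiv ℝ (Function.uncurry u) q c)
      ((ContinuousLinearMap.apply ℝ E3 c).comp (fderiv ℝ (fderiv ℝ (Function.uncurry u)) p)) p :=
    fun c => (ContinuousLinearMap.apply ℝ E3 c).hasFDerivAt.comp p (hDUd p).hasFDerivAt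
  have hgWi : ∀ (c : ℝ × E3) (i : Fin 3), HasFDerivAt (fun q => fderiv ℝ W q c i)
      ((EuclideanSpace.proj i).comp
        ((ContinuousLinearMap.apply ℝ E3 c).comp (fderiv ℝ (fderiv ℝ W) p))) p :=
    fun c i => by
      have h : HasFDerivAt (⇑(EuclideanSpace.proj (𝕜 := ℝ) i) ∘ fun q => fderiv ℝ W q c)
          ((EuclideanSpace.proj i).comp
            ((ContinuousLinearMap.apply ℝ E3 c).comp (fderiv ℝ (fderiv ℝ W) p))) p :=
        (EuclideanSpace.proj i).hasFDerivAt.comp p (hgW c)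
      exact h
  have hgUi : ∀ (c : ℝ × E3) (i : Fin 3),
      HasFDerivAt (fun q => fderiv ℝ (Function.uncurry u) q c i)
      ((EuclideanSpace.proj i).comp
        ((ContinuousLinearMap.apply ℝ E3 c).comp (fderiv ℝ (fderiv ℝ (Function.uncurry u)) p))) p :=
    fun c i => by
      have h : HasFDerivAt
          (⇑(EuclideanSpace.proj (𝕜 := ℝ) i) ∘ fun q => fderiv ℝ (Function.uncurry u) q c)
          ((EuclideanSpace.proj i).comp ((ContinuousLinearMap.apply ℝ E3 c).comp
            (fderiv ℝ (fderiv ℝ (Function.uncurry u)) p))) p :=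
        (EuclideanSpace.proj i).hasFDerivAt.comp p (hgU c)
      exact h
  -- Term 1
  have e1 : deriv (fun τ => divv (fun y => W (τ, y)) x) t
      = ∑ i, fderiv ℝ (fderiv ℝ W) p (1, 0) (0, bb i) i := by
    have hfun : (fun τ => divv (fun y => W (τ, y)) x)
        = fun τ => ∑ i, fderiv ℝ W (τ, x) (0, bb i) i :=
      funext fun τ => div_eq_sum (hWd (τ, x))
    have hD : HasDerivAt (fun τ => ∑ i, fderiv ℝ W (τ, x) (0, bb i) i)
        (∑ i, fderiv ℝ (fderiv ℝ W) p (1, 0) (0, bb i) i) t := by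
      have h := HasDerivAt.fun_sum (fun i (_ : i ∈ Finset.univ) => partial_t' (hgWi (0, bb i) i))
      simpa using h
    rw [hfun, hD.deriv]
  -- Term 2
  have e2 : fderiv ℝ (fun y => divv (fun z => W (t, z)) y) x (u t x)
      = ∑ i, fderiv ℝ (fderiv ℝ W) p (0, u t x) (0, bb i) i := by
    have hfun : (fun y => divv (fun z => W (t, z)) y)
        = fun y => ∑ i, fderiv ℝ W (t, y) (0, bb i) i :=
      funext fun y => div_eq_sum (hWd (t, y))
    have hF := HasFDerivAt.fun_sum (fun i (_ : i ∈ Finset.univ) => partial_x' (hgWi (0, bb i) i))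
    rw [hfun, hF.fderiv]
    simp
  have edivW : divv (fun y => W (t, y)) x = ∑ i, fderiv ℝ W p (0, bb i) i :=
    div_eq_sum (hWd p)
  have edivU : divv (u t) x = ∑ i, fderiv ℝ (Function.uncurry u) p (0, bb i) i :=
    div_eq_sum (hud p)
  -- differentiate the transport law
  have A1 := hgW ((1:ℝ), (0:E3))
  have h0U : HasFDerivAt (fun q : ℝ × E3 => ((0:ℝ), Function.uncurry u q))
      (ContinuousLinearMap.prod 0 (fderiv ℝ (Function.uncurry u) p)) p :=
    (hasFDerivAt_const (0:ℝ) p).prodMk (hud p).hasFDerivAt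
  have A2 := HasFDerivAt.clm_apply (c := fun q => fderiv ℝ W q) (hDWd p).hasFDerivAt h0U
  have h0W : HasFDerivAt (fun q : ℝ × E3 => ((0:ℝ), W q))
      (ContinuousLinearMap.prod 0 (fderiv ℝ W p)) p :=
    (hasFDerivAt_const (0:ℝ) p).prodMk (hWd p).hasFDerivAt
  have A3 := HasFDerivAt.clm_apply (c := fun q => fderiv ℝ (Function.uncurry u) q)
    (hDUd p).hasFDerivAt h0W
  have hs := HasFDerivAt.sum (fun i (_ : i ∈ Finset.univ) => hgUi ((0:ℝ), bb i) i)
  have A4 := HasFDerivAt.smul hs (hWd p).hasFDerivAt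
  have Afull := ((A1.add A2).sub A3).add A4
  have hΦ0 : HasFDerivAt (fun q : ℝ × E3 => fderiv ℝ W q (1, 0)
      + fderiv ℝ W q (0, Function.uncurry u q)
      - fderiv ℝ (Function.uncurry u) q (0, W q)
      + (∑ i, fderiv ℝ (Function.uncurry u) q (0, bb i) i) • W q)
      (0 : (ℝ × E3) →L[ℝ] E3) p := by
    have hfun : (fun q : ℝ × E3 => fderiv ℝ W q (1, 0)
        + fderiv ℝ W q (0, Function.uncurry u q)
        - fderiv ℝ (Function.uncurry u) q (0, W q)
        + (∑ i, fderiv ℝ (Function.uncurry u) q (0, bb i) i) • W q) = fun _ => (0:E3) :=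
      funext hlaw
    rw [hfun]
    exact hasFDerivAt_const _ _
  have hL0 := Afull.unique hΦ0
  have hzi : ∀ i : Fin 3,
      fderiv ℝ (fderiv ℝ W) p (0, bb i) (1, 0) i
      + fderiv ℝ (fderiv ℝ W) p (0, bb i) (0, Function.uncurry u p) i
      + fderiv ℝ W p (0, fderiv ℝ (Function.uncurry u) p (0, bb i)) i
      - fderiv ℝ (fderiv ℝ (Function.uncurry u)) p (0, bb i) (0, W p) i
      - fderiv ℝ (Function.uncurry u) p (0, fderiv ℝ W p (0, bb i)) i
      + (∑ j, fderiv ℝ (fderiv ℝ (Function.uncurry u)) p (0, bb i) (0, bb j) j) * W p i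
      + (∑ j, fderiv ℝ (Function.uncurry u) p (0, bb j) j) * fderiv ℝ W p (0, bb i) i
      = 0 := by
    intro i
    have h := congrArg (fun z : E3 => z i)
      (congrArg (fun M : (ℝ × E3) →L[ℝ] E3 => M ((0:ℝ), bb i)) hL0)
    simp only [ContinuousLinearMap.add_apply, ContinuousLinearMap.sub_apply,
      ContinuousLinearMap.comp_apply, ContinuousLinearMap.flip_apply,
      ContinuousLinearMap.apply_apply, ContinuousLinearMap.smul_apply,
      ContinuousLinearMap.smulRight_apply, ContinuousLinearMap.prod_apply,
      ContinuousLinearMap.zero_apply, ContinuousLinearMap.coe_sum', Finset.sum_apply,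
      PiLp.add_apply, PiLp.sub_apply, PiLp.smul_apply, smul_eq_mul,
      PiLp.proj_apply, PiLp.zero_apply] at h
    linear_combination h
  have H : ∑ i : Fin 3, (fderiv ℝ (fderiv ℝ W) p (0, bb i) (1, 0) i
      + fderiv ℝ (fderiv ℝ W) p (0, bb i) (0, Function.uncurry u p) i
      + fderiv ℝ W p (0, fderiv ℝ (Function.uncurry u) p (0, bb i)) i
      - fderiv ℝ (fderiv ℝ (Function.uncurry u)) p (0, bb i) (0, W p) i
      - fderiv ℝ (Function.uncurry u) p (0, fderiv ℝ W p (0, bb i)) i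
      + (∑ j, fderiv ℝ (fderiv ℝ (Function.uncurry u)) p (0, bb i) (0, bb j) j) * W p i
      + (∑ j, fderiv ℝ (Function.uncurry u) p (0, bb j) j) * fderiv ℝ W p (0, bb i) i)
      = 0 := Finset.sum_eq_zero (fun i _ => hzi i)
  simp only [Finset.sum_add_distrib, Finset.sum_sub_distrib] at H
  have hsymW1 : ∑ i, fderiv ℝ (fderiv ℝ W) p (0, bb i) (1, 0) i
      = ∑ i, fderiv ℝ (fderiv ℝ W) p (1, 0) (0, bb i) i :=
    Finset.sum_congr rfl fun i _ => congrArg (fun z : E3 => z i) (symW _ _)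
  have hsymW2 : ∑ i, fderiv ℝ (fderiv ℝ W) p (0, bb i) (0, Function.uncurry u p) i
      = ∑ i, fderiv ℝ (fderiv ℝ W) p (0, Function.uncurry u p) (0, bb i) i :=
    Finset.sum_congr rfl fun i _ => congrArg (fun z : E3 => z i) (symW _ _)
  -- trace commutation
  have c1 : ∑ i, fderiv ℝ W p (0, fderiv ℝ (Function.uncurry u) p (0, bb i)) i
      = ∑ i, fderiv ℝ (Function.uncurry u) p (0, fderiv ℝ W p (0, bb i)) i := by
    have P := (fderiv ℝ W p).comp (ContinuousLinearMap.inr ℝ ℝ E3)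
    set Q := (fderiv ℝ (Function.uncurry u) p).comp (ContinuousLinearMap.inr ℝ ℝ E3) with hQ
    set P := (fderiv ℝ W p).comp (ContinuousLinearMap.inr ℝ ℝ E3) with hP
    have e1' : ∀ i : Fin 3, fderiv ℝ W p (0, fderiv ℝ (Function.uncurry u) p (0, bb i)) i
        = (P.comp Q) (bb i) i := fun i => by
      simp only [hP, hQ, ContinuousLinearMap.comp_apply, ContinuousLinearMap.inr_apply]
    have e2' : ∀ i : Fin 3, fderiv ℝ (Function.uncurry u) p (0, fderiv ℝ W p (0, bb i)) i
        = (Q.comp P) (bb i) i := fun i => by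
      simp only [hP, hQ, ContinuousLinearMap.comp_apply, ContinuousLinearMap.inr_apply]
    calc ∑ i, fderiv ℝ W p (0, fderiv ℝ (Function.uncurry u) p (0, bb i)) i
        = ∑ i, (P.comp Q) (bb i) i := Finset.sum_congr rfl fun i _ => e1' i
      _ = LinearMap.trace ℝ E3 ((P.comp Q : E3 →L[ℝ] E3) : E3 →ₗ[ℝ] E3) :=
          (trace_eq_sum _).symm
      _ = LinearMap.trace ℝ E3 ((Q.comp P : E3 →L[ℝ] E3) : E3 →ₗ[ℝ] E3) := by
          rw [ContinuousLinearMap.toLinearMap_comp, LinearMap.trace_comp_comm',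
            ← ContinuousLinearMap.toLinearMap_comp]
      _ = ∑ i, (Q.comp P) (bb i) i := trace_eq_sum _
      _ = ∑ i, fderiv ℝ (Function.uncurry u) p (0, fderiv ℝ W p (0, bb i)) i :=
          (Finset.sum_congr rfl fun i _ => (e2' i).symm)
  -- expansion of the directional derivative of div u
  have c2 : ∑ i, fderiv ℝ (fderiv ℝ (Function.uncurry u)) p (0, bb i) (0, W p) i
      = ∑ i, (∑ j, fderiv ℝ (fderiv ℝ (Function.uncurry u)) p (0, bb i) (0, bb j) j) * W p i := by
    have hWp : ((0:ℝ), W p) = ∑ j, W p j • ((0:ℝ), bb j) := by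
      have hb := bb_expand (W p)
      calc ((0:ℝ), W p) = (ContinuousLinearMap.inr ℝ ℝ E3) (W p) := rfl
        _ = (ContinuousLinearMap.inr ℝ ℝ E3) (∑ j, W p j • bb j) := by rw [hb]
        _ = ∑ j, W p j • ((0:ℝ), bb j) := by rw [map_sum]; simp
    have step1 : ∀ i : Fin 3, fderiv ℝ (fderiv ℝ (Function.uncurry u)) p (0, bb i) (0, W p) i
        = ∑ j, W p j * fderiv ℝ (fderiv ℝ (Function.uncurry u)) p (0, bb i) (0, bb j) i := by
      intro i
      have : fderiv ℝ (fderiv ℝ (Function.uncurry u)) p (0, bb i) (0, W p) i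
          = PiLp.proj (𝕜 := ℝ) 2 (fun _ : Fin 3 => ℝ) i
            (fderiv ℝ (fderiv ℝ (Function.uncurry u)) p (0, bb i) ((0:ℝ), W p)) := rfl
      rw [this, hWp, map_sum, map_sum]
      refine Finset.sum_congr rfl fun j _ => ?_
      rw [map_smul, map_smul]
      simp [smul_eq_mul]
    calc ∑ i, fderiv ℝ (fderiv ℝ (Function.uncurry u)) p (0, bb i) (0, W p) i
        = ∑ i, ∑ j, W p j * fderiv ℝ (fderiv ℝ (Function.uncurry u)) p (0, bb i) (0, bb j) i :=
          Finset.sum_congr rfl fun i _ => step1 i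
      _ = ∑ i, ∑ j, W p j * fderiv ℝ (fderiv ℝ (Function.uncurry u)) p (0, bb j) (0, bb i) i := by
          refine Finset.sum_congr rfl fun i _ => Finset.sum_congr rfl fun j _ => ?_
          rw [congrArg (fun z : E3 => z i) (symU (0, bb i) (0, bb j))]
      _ = ∑ j, ∑ i, W p j * fderiv ℝ (fderiv ℝ (Function.uncurry u)) p (0, bb j) (0, bb i) i :=
          Finset.sum_comm
      _ = ∑ i, (∑ j, fderiv ℝ (fderiv ℝ (Function.uncurry u)) p (0, bb i) (0, bb j) j) * W p i := by
          refine Finset.sum_congr rfl fun j _ => ?_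
          rw [Finset.sum_mul]
          refine Finset.sum_congr rfl fun i _ => ?_
          ring
  have hmul : ∑ i, (∑ j, fderiv ℝ (Function.uncurry u) p (0, bb j) j)
        * fderiv ℝ W p (0, bb i) i
      = (∑ i, fderiv ℝ W p (0, bb i) i) * (∑ i, fderiv ℝ (Function.uncurry u) p (0, bb i) i) := by
    rw [← Finset.mul_sum, mul_comm]
  have hup : u t x = Function.uncurry u p := rfl
  rw [e1, e2, edivW, edivU, hup]
  linarith [H, hsymW1, hsymW2, c1, c2, hmul]

end Aux14

open Aux14 in
set_option maxHeartbeats 2000000 in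
/-- If `J` is a vector field moving with the fluid and `ρ`
satisfies the continuity equation, then the scalar field `div(ρ J)` satisfies the
continuity equation, i.e. the associated 3-form is moving with the fluid. -/
theorem div_of_density_times_transported_vector
    (u : ℝ → E3 → E3)
    (hu : ContDiff ℝ (⊤ : ℕ∞) (Function.uncurry u))
    (J : ℝ → E3 → E3)
    (hJ : ContDiff ℝ 2 (Function.uncurry J))
    (hJLie : ∀ t x, deriv (fun τ => J τ x) t + fderiv ℝ (J t) x (u t x)
        - fderiv ℝ (u t) x (J t x) = 0)
    (ρ : ℝ → E3 → ℝ)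
    (hρ : ContDiff ℝ 2 (Function.uncurry ρ))
    (hρcont : ∀ t x, deriv (fun τ => ρ τ x) t + fderiv ℝ (ρ t) x (u t x)
        + ρ t x * divv (u t) x = 0) :
    ∀ t x, deriv (fun τ => divv (fun y => ρ τ y • J τ y) x) t
        + fderiv ℝ (fun y => divv (fun z => ρ t z • J t z) y) x (u t x)
        + divv (fun y => ρ t y • J t y) x * divv (u t) x = 0 := by
  have hW : ContDiff ℝ 2 (fun p : ℝ × E3 => ρ p.1 p.2 • J p.1 p.2) := hρ.smul hJ
  have hρd : Differentiable ℝ (Function.uncurry ρ) := hρ.differentiable two_ne_zero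
  have hJd : Differentiable ℝ (Function.uncurry J) := hJ.differentiable two_ne_zero
  have hud : Differentiable ℝ (Function.uncurry u) := hu.differentiable (by simp)
  have hWd : Differentiable ℝ (fun p : ℝ × E3 => ρ p.1 p.2 • J p.1 p.2) :=
    hW.differentiable two_ne_zero
  refine key u hu (fun p => ρ p.1 p.2 • J p.1 p.2) hW ?_
  rintro ⟨t, x⟩
  -- curried spatial derivatives
  have hρx : HasFDerivAt (ρ t)
      ((fderiv ℝ (Function.uncurry ρ) (t, x)).comp (ContinuousLinearMap.inr ℝ ℝ E3)) x :=
    partial_x' (hρd (t, x)).hasFDerivAt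
  have hJx : HasFDerivAt (J t)
      ((fderiv ℝ (Function.uncurry J) (t, x)).comp (ContinuousLinearMap.inr ℝ ℝ E3)) x :=
    partial_x' (hJd (t, x)).hasFDerivAt
  have hux : HasFDerivAt (u t)
      ((fderiv ℝ (Function.uncurry u) (t, x)).comp (ContinuousLinearMap.inr ℝ ℝ E3)) x :=
    partial_x' (hud (t, x)).hasFDerivAt
  have hWx : HasFDerivAt (fun y => ρ t y • J t y)
      (ρ t x • ((fderiv ℝ (Function.uncurry J) (t, x)).comp (ContinuousLinearMap.inr ℝ ℝ E3))
        + ((fderiv ℝ (Function.uncurry ρ) (t, x)).comp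
            (ContinuousLinearMap.inr ℝ ℝ E3)).smulRight (J t x)) x :=
    hρx.smul hJx
  have hWx' : HasFDerivAt (fun y => ρ t y • J t y)
      ((fderiv ℝ (fun p : ℝ × E3 => ρ p.1 p.2 • J p.1 p.2) (t, x)).comp
        (ContinuousLinearMap.inr ℝ ℝ E3)) x :=
    partial_x' (hWd (t, x)).hasFDerivAt
  have hDWx := hWx'.unique hWx
  -- curried time derivatives
  have hρt : HasDerivAt (fun τ => ρ τ x) (fderiv ℝ (Function.uncurry ρ) (t, x) (1, 0)) t :=
    partial_t' (hρd (t, x)).hasFDerivAt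
  have hJt : HasDerivAt (fun τ => J τ x) (fderiv ℝ (Function.uncurry J) (t, x) (1, 0)) t :=
    partial_t' (hJd (t, x)).hasFDerivAt
  have hWt : HasDerivAt (fun τ => ρ τ x • J τ x)
      (ρ t x • fderiv ℝ (Function.uncurry J) (t, x) (1, 0)
        + fderiv ℝ (Function.uncurry ρ) (t, x) (1, 0) • J t x) t :=
    hρt.smul hJt
  have hWt' : HasDerivAt (fun τ => ρ τ x • J τ x)
      (fderiv ℝ (fun p : ℝ × E3 => ρ p.1 p.2 • J p.1 p.2) (t, x) (1, 0)) t :=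
    partial_t' (hWd (t, x)).hasFDerivAt
  have hDW1 := hWt'.unique hWt
  -- restate the hypotheses
  have hJLie' := hJLie t x
  rw [hJt.deriv, hJx.fderiv, hux.fderiv] at hJLie'
  have hρcont' := hρcont t x
  have hdu : divv (u t) x = ∑ i, fderiv ℝ (Function.uncurry u) (t, x) (0, bb i) i :=
    div_eq_sum (hud (t, x))
  rw [hρt.deriv, hρx.fderiv, hdu] at hρcont'
  -- rewrite the goal
  show fderiv ℝ (fun p : ℝ × E3 => ρ p.1 p.2 • J p.1 p.2) (t, x) (1, 0)
      + fderiv ℝ (fun p : ℝ × E3 => ρ p.1 p.2 • J p.1 p.2) (t, x) (0, Function.uncurry u (t, x))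
      - fderiv ℝ (Function.uncurry u) (t, x) (0, ρ t x • J t x)
      + (∑ i, fderiv ℝ (Function.uncurry u) (t, x) (0, bb i) i) • (ρ t x • J t x) = 0
  have happ : ∀ v : E3, fderiv ℝ (fun p : ℝ × E3 => ρ p.1 p.2 • J p.1 p.2) (t, x) (0, v)
      = ((fderiv ℝ (fun p : ℝ × E3 => ρ p.1 p.2 • J p.1 p.2) (t, x)).comp
          (ContinuousLinearMap.inr ℝ ℝ E3)) v := fun v => by
    simp [ContinuousLinearMap.comp_apply, ContinuousLinearMap.inr_apply]
  have happU : ∀ v : E3, fderiv ℝ (Function.uncurry u) (t, x) (0, v)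
      = ((fderiv ℝ (Function.uncurry u) (t, x)).comp (ContinuousLinearMap.inr ℝ ℝ E3)) v :=
    fun v => by
    simp [ContinuousLinearMap.comp_apply, ContinuousLinearMap.inr_apply]
  have hutx : Function.uncurry u (t, x) = u t x := rfl
  rw [hutx, hDW1, happ, happU, hDWx, map_smul]
  simp only [ContinuousLinearMap.add_apply, ContinuousLinearMap.smul_apply,
    ContinuousLinearMap.smulRight_apply]
  -- now pure algebra
  set r := ρ t x
  set Jt := J t x
  set a := fderiv ℝ (Function.uncurry ρ) (t, x) (1, 0)
  set b := ((fderiv ℝ (Function.uncurry ρ) (t, x)).comp (ContinuousLinearMap.inr ℝ ℝ E3))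
    (u t x)
  set d := ∑ i, fderiv ℝ (Function.uncurry u) (t, x) (0, bb i) i
  set v1 := fderiv ℝ (Function.uncurry J) (t, x) (1, 0)
  set v2 := ((fderiv ℝ (Function.uncurry J) (t, x)).comp (ContinuousLinearMap.inr ℝ ℝ E3))
    (u t x)
  set v3 := ((fderiv ℝ (Function.uncurry u) (t, x)).comp (ContinuousLinearMap.inr ℝ ℝ E3)) Jt
  have hv : v3 = v1 + v2 := (sub_eq_zero.mp hJLie').symm
  have ha : a = -b - r * d := by linarith [hρcont']
  rw [hv, ha]
  module
end
end
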